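/- arXiv:0711.4999 — 6 statements merged into one kernel-verified Lean document; each statement's English description precedes it below -/
import Mathlib

section
/- For all integers k, l ≥ 1 there exists a constant C = C(k,l) > 0 such that for every n and every red/blue colouring of the edges of the complete graph K_n, either the number of red complete subgraphs K_k is at least 2^{-k(l-2) - binom(k+1,2)} · binom(n,k) − C·n^{k-1}, or the number of blue complete subgraphs K_l is at least 2^{-l(k-2) - binom(l+1,2)} · binom(n,l) − C·n^{l-1}. -/
open Finset SimpleGraph
open scoped Nat

/-!
Induction on `k + l`, along the lines of the Erdős–Szekeres bound `R(k, l) ≤ binom(k+l-2, k-1)`.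
With `q = ⌊(n-1)/2⌋` every vertex has red or blue degree at least `q`, so after possibly swapping
the colours at least `n/2` vertices have red degree `≥ q`. Apply the case `(k-1, l)` inside the
red neighbourhood of each of them. If one neighbourhood contains many blue `K_l`, so does `K_n`,
because `binom(n, l) ≤ 2^l binom(q, l) + O(n^(l-1))`. Otherwise every such neighbourhood contains
many red `K_(k-1)`; adding the centre turns each into a red `K_k`, and every red `K_k` arises at
most `k` times, so `k · #red K_k ≥ (n/2) · ramseyCoeff (k-1) l · binom(q, k-1) - O(n^(k-1))`,
while `k binom(n, k) ≤ n 2^(k-1) binom(q, k-1) + O(n^(k-1))`. The coefficient pays for the two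
cases with a factor `2^(-l)` when `l` grows and at least `2^(-k)` when `k` grows.
-/

/-- The number of complete subgraphs of order `t` in `G` (as sets of vertices). -/
noncomputable def cliqueCount {n : ℕ} (G : SimpleGraph (Fin n)) (t : ℕ) : ℕ :=
  {s : Finset (Fin n) | G.IsNClique t s}.ncard

lemma pow_le_pow_add_mul_pow {x z d : ℝ} (hx : 0 ≤ x) (hz : 0 ≤ z) (hd : 0 ≤ d)
    (hxz : x ≤ z + d) (t : ℕ) : x ^ t ≤ z ^ t + t * d * x ^ (t - 1) := by
  rcases le_total x z with h | h
  · have := pow_le_pow_left₀ hx h t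
    have : 0 ≤ t * d * x ^ (t - 1) := by positivity
    linarith
  · have key := abs_pow_sub_pow_le x z t
    rw [abs_of_nonneg (sub_nonneg.2 h), abs_of_nonneg hx, abs_of_nonneg hz,
      max_eq_left h] at key
    have : (x - z) * t * x ^ (t - 1) ≤ t * d * x ^ (t - 1) := by
      rw [mul_comm (x - z)]; gcongr; linarith
    linarith [le_abs_self (x ^ t - z ^ t)]

lemma choose_le_two_pow_mul_choose_add {m q : ℕ} (hm : m ≤ 2 * q + 2) (t : ℕ) :
    (m.choose t : ℝ) ≤ 2 ^ t * q.choose t + 2 * t ^ 2 * m ^ (t - 1) := by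
  have hm_pow : (t ! * m.choose t : ℝ) ≤ m ^ t := by
    have := Nat.descFactorial_le_pow m t
    rw [Nat.descFactorial_eq_factorial_mul_choose] at this
    exact_mod_cast this
  have hq_pow : ((q + 1 - t : ℕ) : ℝ) ^ t ≤ t ! * q.choose t := by
    have := Nat.pow_sub_le_descFactorial q t
    rw [Nat.descFactorial_eq_factorial_mul_choose] at this
    exact_mod_cast this
  have hm_le : (m : ℝ) ≤ 2 * (q + 1 - t : ℕ) + 2 * t := by
    exact_mod_cast (by omega : m ≤ 2 * (q + 1 - t) + 2 * t)
  have key := pow_le_pow_add_mul_pow (by positivity) (by positivity) (by positivity) hm_le t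
  rw [mul_pow] at key
  have ht : (0 : ℝ) < t ! := by exact_mod_cast t.factorial_pos
  refine le_of_mul_le_mul_left ?_ ht
  have : 2 * t ^ 2 * (m : ℝ) ^ (t - 1) ≤ t ! * (2 * t ^ 2 * m ^ (t - 1)) :=
    le_mul_of_one_le_left (by positivity) (by exact_mod_cast t.factorial_pos)
  nlinarith [pow_pos (two_pos (α := ℝ)) t]

lemma succ_mul_choose_succ_le {n q : ℕ} (hn : n ≤ 2 * q + 3) (k : ℕ) :
    ((k + 1) * n.choose (k + 1) : ℝ) ≤ n * 2 ^ k * q.choose k + 2 * k ^ 2 * n ^ k := by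
  rcases n with _ | m
  · simp only [Nat.choose_zero_succ, CharP.cast_eq_zero, mul_zero, zero_mul, zero_add]
    positivity
  have hmul : (k + 1) * (m + 1).choose (k + 1) = (m + 1) * m.choose k := by
    rw [Nat.add_one_mul_choose_eq, mul_comm]
  have hpow : (m + 1 : ℝ) * (k ^ 2 * m ^ (k - 1)) ≤ k ^ 2 * (m + 1) ^ k := by
    rcases k with _ | k
    · simp
    · rw [pow_succ' _ k, Nat.add_sub_cancel]
      calc _ = ((k + 1 : ℕ) : ℝ) ^ 2 * ((m + 1) * (m : ℝ) ^ k) := by ring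
        _ ≤ _ := by gcongr; linarith
  rw [← Nat.cast_add_one, ← Nat.cast_mul, hmul]
  push_cast
  calc ((m : ℝ) + 1) * m.choose k
      ≤ (m + 1) * (2 ^ k * q.choose k + 2 * k ^ 2 * m ^ (k - 1)) := by
        gcongr; exact choose_le_two_pow_mul_choose_add (by omega) k
    _ ≤ _ := by nlinarith

noncomputable def ramseyCoeff (k l : ℕ) : ℝ :=
  (2 : ℝ) ^ (-((k : ℤ) * ((l : ℤ) - 2)) - ((k + 1).choose 2 : ℤ))

lemma ramseyCoeff_pos (k l : ℕ) : 0 < ramseyCoeff k l := by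
  unfold ramseyCoeff; positivity

lemma ramseyCoeff_le_one {l : ℕ} (hl : 1 ≤ l) (k : ℕ) : ramseyCoeff k l ≤ 1 := by
  have hchoose : ((k + 1).choose 2 : ℤ) = k + k.choose 2 := by
    rw [Nat.choose_succ_succ, Nat.choose_one_right]; push_cast; ring
  have hl' : (1 : ℤ) ≤ l := by exact_mod_cast hl
  apply zpow_le_one_of_nonpos₀ one_le_two
  rw [hchoose]
  nlinarith [Int.natCast_nonneg (k.choose 2), Int.natCast_nonneg k]

lemma ramseyCoeff_succ_right_mul (k l : ℕ) : ramseyCoeff k (l + 1) * 2 ^ k = ramseyCoeff k l := by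
  unfold ramseyCoeff
  rw [← zpow_natCast, ← zpow_add₀ two_ne_zero]
  congr 1
  push_cast; ring

lemma ramseyCoeff_succ_left_mul_le {l : ℕ} (hl : 2 ≤ l) (k : ℕ) :
    ramseyCoeff (k + 1) l * 2 ^ (k + 1) ≤ ramseyCoeff k l := by
  unfold ramseyCoeff
  rw [← zpow_natCast, ← zpow_add₀ two_ne_zero]
  apply zpow_le_zpow_right₀ one_le_two
  have hchoose : ((k + 1 + 1).choose 2 : ℤ) = (k + 1) + (k + 1).choose 2 := by
    rw [Nat.choose_succ_succ (k + 1), Nat.choose_one_right]; push_cast; ring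
  have hl' : (2 : ℤ) ≤ l := by exact_mod_cast hl
  rw [hchoose]
  push_cast
  linarith

section Counting

variable {V : Type*} (G : SimpleGraph V)

lemma compl_induce (s : Set V) : (G.induce s)ᶜ = Gᶜ.induce s := by
  ext a b
  simp [Subtype.ext_iff]

lemma ncard_cliqueSet_one [Finite V] : (G.cliqueSet 1).ncard = Nat.card V := by
  rw [cliqueSet_one, Set.ncard_range_of_injective Finset.singleton_injective]

lemma ncard_cliqueSet_induce_le [Finite V] (s : Set V) (t : ℕ) :
    ((G.induce s).cliqueSet t).ncard ≤ (G.cliqueSet t).ncard :=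
  Set.ncard_le_ncard_of_injOn (fun c => c.map (Function.Embedding.subtype _))
    (fun c hc => (isNClique_induce_iff s c t).1 hc) (fun _ _ _ _ h => Finset.map_injective _ h)
    (Set.toFinite _)

lemma ncard_cliqueSet_induce_neighborSet_le [Fintype V] [DecidableEq V] [DecidableRel G.Adj]
    (v : V) (k : ℕ) :
    ((G.induce (G.neighborSet v)).cliqueSet k).ncard
      ≤ #{T ∈ G.cliqueFinset (k + 1) | v ∈ T} := by
  rw [← Set.ncard_coe_finset]
  refine Set.ncard_le_ncard_of_injOn (fun c => insert v (c.map (Function.Embedding.subtype _)))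
    ?_ ?_ (Set.toFinite _)
  · intro c hc
    have hc := (isNClique_induce_iff _ c k).1 hc
    simp only [coe_filter, mem_cliqueFinset_iff, Set.mem_ofPred_eq, mem_insert_self, and_true]
    refine hc.insert fun b hb => ?_
    obtain ⟨b, -, rfl⟩ := Finset.mem_map.1 hb
    exact b.2
  · intro c _ d _ h
    have hv : ∀ c : Finset (G.neighborSet v), v ∉ c.map (Function.Embedding.subtype _) := by
      intro c hc
      obtain ⟨b, -, hb⟩ := Finset.mem_map.1 hc
      have hbv := b.2
      rw [Function.Embedding.coe_subtype] at hb
      rw [hb] at hbv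
      exact G.notMem_neighborSet_self hbv
    apply Finset.map_injective (Function.Embedding.subtype _)
    rw [← erase_insert (hv c), ← erase_insert (hv d)]
    exact congrArg (·.erase v) h

lemma sum_ncard_cliqueSet_induce_neighborSet_le [Fintype V] [DecidableRel G.Adj] (A : Finset V)
    (k : ℕ) : ∑ v ∈ A, ((G.induce (G.neighborSet v)).cliqueSet k).ncard
      ≤ (k + 1) * (G.cliqueSet (k + 1)).ncard := by
  classical
  calc ∑ v ∈ A, ((G.induce (G.neighborSet v)).cliqueSet k).ncard
      ≤ ∑ v ∈ A, #{T ∈ G.cliqueFinset (k + 1) | v ∈ T} :=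
        sum_le_sum fun v _ => ncard_cliqueSet_induce_neighborSet_le G v k
    _ = ∑ T ∈ G.cliqueFinset (k + 1), #{v ∈ A | v ∈ T} :=
        sum_card_bipartiteAbove_eq_sum_card_bipartiteBelow (r := fun v T => v ∈ T)
    _ ≤ ∑ T ∈ G.cliqueFinset (k + 1), #T :=
        sum_le_sum fun T _ => card_le_card fun v hv => (mem_filter.1 hv).2
    _ = (k + 1) * (G.cliqueSet (k + 1)).ncard := by
        rw [sum_congr rfl fun T hT => (mem_cliqueFinset_iff.1 hT).card_eq, sum_const, smul_eq_mul,
          mul_comm, ← coe_cliqueFinset, Set.ncard_coe_finset]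

end Counting

section Multiplicity

variable {V : Type*} [Fintype V]

def CliqueLowerBound (G : SimpleGraph V) (k l : ℕ) (C : ℝ) : Prop :=
  ramseyCoeff k l * (Fintype.card V).choose k - C * Fintype.card V ^ (k - 1)
    ≤ (G.cliqueSet k).ncard

lemma CliqueLowerBound.mono {G : SimpleGraph V} {k l : ℕ} {C C' : ℝ}
    (h : CliqueLowerBound G k l C) (hC : C ≤ C') : CliqueLowerBound G k l C' :=
  h.trans' (by gcongr)

lemma cliqueLowerBound_one (G : SimpleGraph V) {l : ℕ} (hl : 1 ≤ l) {C : ℝ} (hC : 0 ≤ C) :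
    CliqueLowerBound G 1 l C := by
  have := ramseyCoeff_le_one hl 1
  rw [CliqueLowerBound, ncard_cliqueSet_one, Nat.card_eq_fintype_card, Nat.choose_one_right,
    Nat.sub_self, pow_zero, mul_one]
  nlinarith [(Fintype.card V).cast_nonneg (α := ℝ)]

lemma CliqueLowerBound.of_induce {H : SimpleGraph V} {s : Set V} [Fintype s] {t k q : ℕ}
    {C : ℝ} (hC : 0 ≤ C) (hq : Fintype.card V ≤ 2 * q + 2) (hs : q ≤ Fintype.card s)
    (h : CliqueLowerBound (H.induce s) t k C) : CliqueLowerBound H t (k + 1) (C + 2 * t ^ 2) := by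
  set n := Fintype.card V
  have hsn : Fintype.card s ≤ n := Fintype.card_subtype_le _
  have hcount := ncard_cliqueSet_induce_le H s t
  have hbin := choose_le_two_pow_mul_choose_add hq t
  have hcoeff := ramseyCoeff_succ_right_mul t k
  have hle := ramseyCoeff_le_one (Nat.le_add_left 1 k) t
  have hpos := ramseyCoeff_pos t (k + 1)
  have herr : 0 ≤ 2 * (t : ℝ) ^ 2 * n ^ (t - 1) := by positivity
  calc ramseyCoeff t (k + 1) * n.choose t - (C + 2 * t ^ 2) * n ^ (t - 1)
      ≤ ramseyCoeff t k * q.choose t - C * n ^ (t - 1) := by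
        rw [← hcoeff]
        nlinarith [mul_le_mul_of_nonneg_left hbin hpos.le]
    _ ≤ ramseyCoeff t k * (Fintype.card s).choose t - C * (Fintype.card s) ^ (t - 1) := by
        gcongr
        exact (ramseyCoeff_pos t k).le
    _ ≤ ((H.induce s).cliqueSet t).ncard := h
    _ ≤ (H.cliqueSet t).ncard := by exact_mod_cast hcount

lemma CliqueLowerBound.succ_of_forall_mem {G : SimpleGraph V} [DecidableRel G.Adj] {k l q : ℕ}
    {C : ℝ} (hk : 1 ≤ k) (hl : 2 ≤ l) (hC : 0 ≤ C) (hq : Fintype.card V ≤ 2 * q + 2)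
    (A : Finset V) (hA : Fintype.card V ≤ 2 * #A) (hdeg : ∀ v ∈ A, q ≤ G.degree v)
    (h : ∀ v ∈ A, CliqueLowerBound (G.induce (G.neighborSet v)) k l C) :
    CliqueLowerBound G (k + 1) l (C + 2 * k ^ 2) := by
  set n := Fintype.card V
  set a := ramseyCoeff k l
  set R : ℝ := ((G.cliqueSet (k + 1)).ncard : ℝ) with hR
  have hvertex : ∀ v ∈ A, a * q.choose k - C * n ^ (k - 1)
      ≤ ((G.induce (G.neighborSet v)).cliqueSet k).ncard := by
    intro v hv
    refine (h v hv).trans' ?_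
    have hdeg_le : G.degree v ≤ n := (G.degree_lt_card_verts v).le
    rw [card_neighborSet_eq_degree]
    gcongr
    · exact (ramseyCoeff_pos k l).le
    · exact hdeg v hv
  have hsum : (#A : ℝ) * (a * q.choose k - C * n ^ (k - 1)) ≤ (k + 1) * R := by
    have hcount := sum_ncard_cliqueSet_induce_neighborSet_le G A k
    calc (#A : ℝ) * (a * q.choose k - C * n ^ (k - 1))
        ≤ ∑ v ∈ A, (((G.induce (G.neighborSet v)).cliqueSet k).ncard : ℝ) := by
          simpa using card_nsmul_le_sum A _ _ hvertex
      _ ≤ (k + 1) * R := by rw [hR]; exact_mod_cast hcount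
  have hA_le : (#A : ℝ) ≤ n := by exact_mod_cast A.card_le_univ
  have hA_ge : (n : ℝ) ≤ 2 * #A := by exact_mod_cast hA
  have hbin := succ_mul_choose_succ_le (by omega : n ≤ 2 * q + 3) k
  have hcoeff := ramseyCoeff_succ_left_mul_le hl k
  have hle := ramseyCoeff_le_one (by omega : 1 ≤ l) (k + 1)
  have hpos := ramseyCoeff_pos (k + 1) l
  have hnpow : (n : ℝ) * n ^ (k - 1) = n ^ k := by rw [← pow_succ', Nat.sub_add_cancel hk]
  have hX : 0 ≤ a * q.choose k := mul_nonneg (ramseyCoeff_pos k l).le (by positivity)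
  have hY : 0 ≤ C * (n : ℝ) ^ (k - 1) := by positivity
  have hred : (n / 2 : ℝ) * (a * q.choose k) - C * n ^ k ≤ (k + 1) * R := by
    rw [← hnpow]
    nlinarith [mul_le_mul_of_nonneg_right hA_le hY]
  have hcount : (k + 1) * (ramseyCoeff (k + 1) l * n.choose (k + 1))
      ≤ (n / 2 : ℝ) * (a * q.choose k) + 2 * k ^ 2 * n ^ k := by
    have h2 : (0 : ℝ) ≤ 2 * k ^ 2 * n ^ k := by positivity
    calc (k + 1) * (ramseyCoeff (k + 1) l * n.choose (k + 1))
        ≤ ramseyCoeff (k + 1) l * (n * 2 ^ k * q.choose k + 2 * k ^ 2 * n ^ k) := by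
          rw [mul_left_comm]; exact mul_le_mul_of_nonneg_left hbin hpos.le
      _ = (ramseyCoeff (k + 1) l * 2 ^ (k + 1)) * (n / 2 * q.choose k)
          + ramseyCoeff (k + 1) l * (2 * k ^ 2 * n ^ k) := by ring
      _ ≤ a * (n / 2 * q.choose k) + 1 * (2 * k ^ 2 * n ^ k) := by gcongr
      _ = _ := by ring
  have hE : 0 ≤ (C + 2 * k ^ 2) * (n : ℝ) ^ k := by positivity
  rw [CliqueLowerBound, Nat.add_sub_cancel]
  nlinarith

def RamseyMultiplicityBound (k l : ℕ) (C : ℝ) : Prop :=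
  ∀ (V : Type) [Fintype V] (G : SimpleGraph V),
    CliqueLowerBound G k l C ∨ CliqueLowerBound Gᶜ l k C

lemma RamseyMultiplicityBound.symm {k l : ℕ} {C : ℝ} (h : RamseyMultiplicityBound k l C) :
    RamseyMultiplicityBound l k C := fun V _ G => by
  simpa only [compl_compl, or_comm] using h V Gᶜ

lemma ramseyMultiplicityBound_one_left {l : ℕ} (hl : 1 ≤ l) {C : ℝ} (hC : 0 ≤ C) :
    RamseyMultiplicityBound 1 l C :=
  fun _ _ G => Or.inl (cliqueLowerBound_one G hl hC)

lemma card_le_two_mul_card_filter_le_degree_or [DecidableEq V] (G : SimpleGraph V)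
    [DecidableRel G.Adj] {q : ℕ} (hq : 2 * q ≤ Fintype.card V - 1) :
    Fintype.card V ≤ 2 * #{v | q ≤ G.degree v} ∨
      Fintype.card V ≤ 2 * #{v | q ≤ Gᶜ.degree v} := by
  have hcover :
      univ ⊆ univ.filter (q ≤ G.degree ·) ∪ univ.filter (q ≤ Gᶜ.degree ·) := by
    intro v _
    have := G.degree_compl v
    have := G.degree_lt_card_verts v
    simp only [mem_union, mem_filter, mem_univ, true_and]
    omega
  have := (card_le_card hcover).trans (card_union_le _ _)
  rw [card_univ] at this
  omega

end Multiplicity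

lemma RamseyMultiplicityBound.cliqueLowerBound_succ_or {k l : ℕ} {C : ℝ} (hk : 1 ≤ k)
    (hl : 1 ≤ l) (hC : 0 ≤ C) (h : RamseyMultiplicityBound k (l + 1) C) {V : Type} [Fintype V]
    (G : SimpleGraph V) [DecidableRel G.Adj]
    (hA : Fintype.card V ≤ 2 * #{v | (Fintype.card V - 1) / 2 ≤ G.degree v}) :
    CliqueLowerBound G (k + 1) (l + 1) (C + 2 * (k + 1) ^ 2 + 2 * (l + 1) ^ 2) ∨
      CliqueLowerBound Gᶜ (l + 1) (k + 1) (C + 2 * (k + 1) ^ 2 + 2 * (l + 1) ^ 2) := by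
  set q := (Fintype.card V - 1) / 2
  have hq : Fintype.card V ≤ 2 * q + 2 := by omega
  by_cases hblue : ∃ v, q ≤ G.degree v ∧
      CliqueLowerBound (G.induce (G.neighborSet v))ᶜ (l + 1) k C
  · obtain ⟨v, hv, hb⟩ := hblue
    rw [compl_induce] at hb
    refine .inr ((hb.of_induce hC hq (by rwa [card_neighborSet_eq_degree])).mono ?_)
    push_cast
    nlinarith
  · push Not at hblue
    refine .inl ((CliqueLowerBound.succ_of_forall_mem hk (by omega) hC hq _ hA
      (fun v hv => (mem_filter.1 hv).2) fun v hv => ?_).mono ?_)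
    · exact (h _ _).resolve_right (hblue v (mem_filter.1 hv).2)
    · nlinarith [k.cast_nonneg (α := ℝ)]

lemma RamseyMultiplicityBound.succ_succ {k l : ℕ} {C₁ C₂ : ℝ} (hk : 1 ≤ k) (hl : 1 ≤ l)
    (hC₁ : 0 ≤ C₁) (hC₂ : 0 ≤ C₂) (h₁ : RamseyMultiplicityBound k (l + 1) C₁)
    (h₂ : RamseyMultiplicityBound (k + 1) l C₂) :
    RamseyMultiplicityBound (k + 1) (l + 1) (C₁ + C₂ + 2 * (k + 1) ^ 2 + 2 * (l + 1) ^ 2) := by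
  intro V _ G
  classical
  rcases card_le_two_mul_card_filter_le_degree_or G (q := (Fintype.card V - 1) / 2) (by omega)
    with hA | hA
  · exact (h₁.cliqueLowerBound_succ_or hk hl hC₁ G hA).imp (·.mono (by linarith))
      (·.mono (by linarith))
  · have := h₂.symm.cliqueLowerBound_succ_or hl hk hC₂ Gᶜ hA
    rw [compl_compl] at this
    exact this.symm.imp (·.mono (by linarith)) (·.mono (by linarith))

theorem exists_ramseyMultiplicityBound (k l : ℕ) :
    ∃ C > 0, RamseyMultiplicityBound (k + 1) (l + 1) C := by
  induction k generalizing l with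
  | zero => exact ⟨1, one_pos, ramseyMultiplicityBound_one_left (by omega) zero_le_one⟩
  | succ k ihk =>
    induction l with
    | zero => exact ⟨1, one_pos, (ramseyMultiplicityBound_one_left (by omega) zero_le_one).symm⟩
    | succ l ihl =>
      obtain ⟨C₁, hC₁, h₁⟩ := ihk (l + 1)
      obtain ⟨C₂, hC₂, h₂⟩ := ihl
      exact ⟨_, by positivity, h₁.succ_succ (by omega) (by omega) hC₁.le hC₂.le h₂⟩

/-- A red/blue colouring of the edges of `K_n` is encoded by a simple graph `G` on `n`
vertices: the edges of `G` are the red edges, and the edges of the complement `Gᶜ` are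
the blue edges.  Red `K_k`s are `k`-cliques of `G` and blue `K_l`s are `l`-cliques of `Gᶜ`. -/
theorem stmt0 (k l : ℕ) (hk : 1 ≤ k) (hl : 1 ≤ l) :
    ∃ C : ℝ, 0 < C ∧ ∀ (n : ℕ) (G : SimpleGraph (Fin n)),
      ((2 : ℝ) ^ (-((k : ℤ) * ((l : ℤ) - 2)) - ((k + 1).choose 2 : ℤ)) * (n.choose k : ℝ)
          - C * (n : ℝ) ^ (k - 1) ≤ (cliqueCount G k : ℝ)) ∨
      ((2 : ℝ) ^ (-((l : ℤ) * ((k : ℤ) - 2)) - ((l + 1).choose 2 : ℤ)) * (n.choose l : ℝ)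
          - C * (n : ℝ) ^ (l - 1) ≤ (cliqueCount Gᶜ l : ℝ)) := by
  obtain ⟨k, rfl⟩ := Nat.exists_eq_add_of_le' hk
  obtain ⟨l, rfl⟩ := Nat.exists_eq_add_of_le' hl
  obtain ⟨C, hC, h⟩ := exists_ramseyMultiplicityBound k l
  refine ⟨C, hC, fun n G => ?_⟩
  have := h (Fin n) G
  rwa [CliqueLowerBound, CliqueLowerBound, Fintype.card_fin] at this
end

section
/- Define a doubly-indexed sequence of reals M_{k,l} for k, l ≥ 1 by: M_{k,1} = M_{1,l} = 1 for all k, l ≥ 1, and M_{k,l} = (M_{k,l−1}^{−1/μ} + M_{k−1,l}^{−1/μ})^{−μ} for k, l ≥ 2, where μ = max(k,l). Then for every integer t ≥ 2, c_t ≥ M_{t,t}. -/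
/-- `kt n t` is the minimum of `k_t(G) + k_t(Gᶜ)` over all graphs `G` on `n` vertices,
i.e. the minimum number of monochromatic `K_t`s in a two-colouring of the edges of `K_n`. -/
noncomputable def kt (n t : ℕ) : ℕ :=
  sInf {m : ℕ | ∃ G : SimpleGraph (Fin n), cliqueCount G t + cliqueCount Gᶜ t = m}

/-- `ctn t n = k_t(n) / binom(n,t)`. -/
noncomputable def ctn (t n : ℕ) : ℝ := (kt n t : ℝ) / (n.choose t : ℝ)

/-!
Write `N_k(G, s)` for the number of `k`-cliques of `G` inside `s`, `n = |s|` and `μ = max k l`.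
By induction on `k + l`,
`M_{k,l} n^μ ≤ k! N_k(G, s) n^{μ-k} + l! N_l(Gᶜ, s) n^{μ-l} + O(n^{μ-1})`.
A vertex `v ∈ s` splits the remaining `n - 1` vertices into its `Gᶜ`- and `G`-neighbourhoods,
of sizes `b + r = n - 1`. The two-point Radon inequality
`M_{k,l} (b + r)^μ ≤ θ M_{k,l-1} b^μ + (1 - θ) M_{k-1,l} r^μ` (this is where the recursion for `M`
comes from) reduces the bound to the induction hypotheses on the two neighbourhoods, and summing
over `v` uses `∑_v N_{k-1}(G, nbhd v) = k N_k(G, s)`.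
For `k = l = t` and `s` the whole vertex set this reads `t! k_t(n) ≥ M_{t,t} n^t - O(n^{t-1})`,
and `t! (n choose t) ≤ n^t` gives `c_t(n) ≥ M_{t,t} - O(1/n)`.
-/

open Finset Real

lemma pow_le_sub_one_pow_add {x : ℝ} (hx : 1 ≤ x) (n : ℕ) :
    x ^ n ≤ (x - 1) ^ n + n * x ^ (n - 1) := by
  have h := abs_pow_sub_pow_le x (x - 1) n
  rw [sub_sub_cancel, abs_one, one_mul, abs_of_nonneg (by linarith : (0 : ℝ) ≤ x),
    abs_of_nonneg (by linarith : (0 : ℝ) ≤ x - 1), max_eq_left (by linarith)] at h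
  linarith [le_abs_self (x ^ n - (x - 1) ^ n)]

lemma add_div_add_pow_le {a b x y : ℝ} (ha : 0 < a) (hb : 0 < b) (hx : 0 ≤ x) (hy : 0 ≤ y)
    (n : ℕ) : ((x + y) / (a + b)) ^ n ≤ a / (a + b) * (x / a) ^ n + b / (a + b) * (y / b) ^ n := by
  have hab : 0 < a + b := add_pos ha hb
  have hmean : a / (a + b) * (x / a) + b / (a + b) * (y / b) = (x + y) / (a + b) := by
    field_simp
  simpa only [smul_eq_mul, hmean] using (convexOn_pow n).2 (Set.mem_Ici.2 (div_nonneg hx ha.le))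
    (Set.mem_Ici.2 (div_nonneg hy hb.le)) (div_nonneg ha.le hab.le) (div_nonneg hb.le hab.le)
    (by field_simp)

lemma exists_weight_rpow_add_rpow_mul_add_pow_le {A B : ℝ} (hA : 0 < A) (hB : 0 < B) {μ : ℕ}
    (hμ : 0 < μ) : ∃ θ : ℝ, 0 ≤ θ ∧ θ ≤ 1 ∧ ∀ x y : ℝ, 0 ≤ x → 0 ≤ y →
      (A ^ (-1 / μ : ℝ) + B ^ (-1 / μ : ℝ)) ^ (-μ : ℝ) * (x + y) ^ μ ≤
        θ * A * x ^ μ + (1 - θ) * B * y ^ μ := by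
  -- With `A = (a ^ μ)⁻¹`, `B = (b ^ μ)⁻¹` this is Jensen for `x ↦ x ^ μ` at the points
  -- `x / a`, `y / b` with weights `θ = a / (a + b)` and `1 - θ`.
  have hpow {X : ℝ} (hX : 0 < X) : X = ((X ^ (-1 / μ : ℝ)) ^ μ)⁻¹ := by
    rw [← rpow_natCast, ← rpow_mul hX.le, div_mul_cancel₀ _ (by positivity), rpow_neg_one, inv_inv]
  have ha : 0 < A ^ (-1 / μ : ℝ) := rpow_pos_of_pos hA _
  have hb : 0 < B ^ (-1 / μ : ℝ) := rpow_pos_of_pos hB _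
  set a := A ^ (-1 / μ : ℝ)
  set b := B ^ (-1 / μ : ℝ)
  have hAa : A = (a ^ μ)⁻¹ := hpow hA
  have hBb : B = (b ^ μ)⁻¹ := hpow hB
  clear_value a b
  clear hpow
  subst hAa hBb
  have hab : 0 < a + b := add_pos ha hb
  refine ⟨a / (a + b), by positivity, (div_le_one hab).2 (by linarith), fun x y hx hy ↦ ?_⟩
  rw [show 1 - a / (a + b) = b / (a + b) by field_simp; ring, rpow_neg hab.le, rpow_natCast]
  calc ((a + b) ^ μ)⁻¹ * (x + y) ^ μ = ((x + y) / (a + b)) ^ μ := by rw [div_pow]; ring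
    _ ≤ a / (a + b) * (x / a) ^ μ + b / (a + b) * (y / b) ^ μ := add_div_add_pow_le ha hb hx hy μ
    _ = a / (a + b) * (a ^ μ)⁻¹ * x ^ μ + b / (a + b) * (b ^ μ)⁻¹ * y ^ μ := by
      rw [div_pow, div_pow]; ring

namespace SimpleGraph

open scoped Classical

variable {V : Type*} (G : SimpleGraph V)

noncomputable def cliquesIn (j : ℕ) (s : Finset V) : Finset (Finset V) :=
  {T ∈ s.powerset | G.IsNClique j T}

variable {G}

@[simp]
lemma mem_cliquesIn {j : ℕ} {s T : Finset V} : T ∈ G.cliquesIn j s ↔ T ⊆ s ∧ G.IsNClique j T := by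
  simp [cliquesIn]

lemma cliquesIn_mono {j : ℕ} {s s' : Finset V} (h : s ⊆ s') : G.cliquesIn j s ⊆ G.cliquesIn j s' :=
  fun _ hT ↦ mem_cliquesIn.2 ⟨(mem_cliquesIn.1 hT).1.trans h, (mem_cliquesIn.1 hT).2⟩

lemma card_cliquesIn_one (s : Finset V) : #(G.cliquesIn 1 s) = #s := by
  have : G.cliquesIn 1 s = s.map ⟨({·}), singleton_injective⟩ := by
    ext T
    simp only [mem_cliquesIn, isNClique_one, mem_map, Function.Embedding.coeFn_mk]
    constructor
    · rintro ⟨hTs, a, rfl⟩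
      exact ⟨a, singleton_subset_iff.1 hTs, rfl⟩
    · rintro ⟨a, ha, rfl⟩
      exact ⟨singleton_subset_iff.2 ha, a, rfl⟩
  rw [this, card_map]

lemma card_filter_adj_add_card_filter_compl_adj {v : V} {s : Finset V} (hv : v ∈ s) :
    #{u ∈ s | G.Adj v u} + #{u ∈ s | Gᶜ.Adj v u} + 1 = #s := by
  have : {u ∈ s | ¬G.Adj v u} = insert v {u ∈ s | Gᶜ.Adj v u} := by
    ext u
    by_cases huv : u = v
    · subst huv; simp [hv]
    · simp [huv, Ne.symm huv]
  rw [← card_filter_add_card_filter_not (s := s) (G.Adj v), this,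
    card_insert_of_notMem (by simp), add_assoc]

lemma card_cliquesIn_neighbors {v : V} {s : Finset V} (hv : v ∈ s) (j : ℕ) :
    #(G.cliquesIn j {u ∈ s | G.Adj v u}) = #{T ∈ G.cliquesIn (j + 1) s | v ∈ T} := by
  refine card_bij' (fun T _ ↦ insert v T) (fun T _ ↦ T.erase v) ?_ ?_ ?_ ?_
  · intro T hT
    obtain ⟨hTs, hT⟩ := mem_cliquesIn.1 hT
    have hadj : ∀ u ∈ T, G.Adj v u := fun u hu ↦ (mem_filter.1 (hTs hu)).2
    refine mem_filter.2 ⟨mem_cliquesIn.2 ⟨insert_subset hv ?_, hT.insert hadj⟩, mem_insert_self _ _⟩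
    exact hTs.trans (filter_subset _ _)
  · intro T hT
    obtain ⟨hT, hvT⟩ := mem_filter.1 hT
    obtain ⟨hTs, hT⟩ := mem_cliquesIn.1 hT
    refine mem_cliquesIn.2 ⟨fun u hu ↦ ?_, hT.erase_of_mem hvT⟩
    obtain ⟨huv, huT⟩ := mem_erase.1 hu
    exact mem_filter.2 ⟨hTs huT, hT.1 hvT huT (Ne.symm huv)⟩
  · intro T hT
    exact erase_insert fun hvT ↦ G.irrefl (mem_filter.1 ((mem_cliquesIn.1 hT).1 hvT)).2
  · intro T hT
    exact insert_erase (mem_filter.1 hT).2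

lemma sum_card_cliquesIn_neighbors (j : ℕ) (s : Finset V) :
    ∑ v ∈ s, #(G.cliquesIn j {u ∈ s | G.Adj v u}) = (j + 1) * #(G.cliquesIn (j + 1) s) := by
  calc ∑ v ∈ s, #(G.cliquesIn j {u ∈ s | G.Adj v u})
      = ∑ v ∈ s, #((G.cliquesIn (j + 1) s).bipartiteAbove (· ∈ ·) v) :=
        sum_congr rfl fun v hv ↦ card_cliquesIn_neighbors hv j
    _ = ∑ T ∈ G.cliquesIn (j + 1) s, #(s.bipartiteBelow (· ∈ ·) T) :=
        sum_card_bipartiteAbove_eq_sum_card_bipartiteBelow _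
    _ = ∑ T ∈ G.cliquesIn (j + 1) s, (j + 1) := by
        refine sum_congr rfl fun T hT ↦ ?_
        obtain ⟨hTs, hT⟩ := mem_cliquesIn.1 hT
        rw [bipartiteBelow, filter_mem_eq_inter, inter_eq_right.2 hTs, hT.2]
    _ = (j + 1) * #(G.cliquesIn (j + 1) s) := by rw [sum_const, smul_eq_mul, mul_comm]

variable (G) in
noncomputable def cliqueBound (k l e : ℕ) (C : ℝ) (s : Finset V) (x : ℝ) : ℝ :=
  k.factorial * #(G.cliquesIn k s) * x ^ (e - k) + l.factorial * #(Gᶜ.cliquesIn l s) * x ^ (e - l)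
    + C * x ^ (e - 1)

lemma cliqueBound_compl (k l e : ℕ) (C : ℝ) (s : Finset V) (x : ℝ) :
    Gᶜ.cliqueBound l k e C s x = G.cliqueBound k l e C s x := by
  simp only [cliqueBound, compl_compl]
  ring

lemma cliqueBound_nonneg {k l e : ℕ} {C x : ℝ} (hC : 0 ≤ C) (hx : 0 ≤ x) (s : Finset V) :
    0 ≤ G.cliqueBound k l e C s x := by
  unfold cliqueBound
  positivity

lemma cliqueBound_mono {k l e : ℕ} {C C' x y : ℝ} (hC : 0 ≤ C) (hCC' : C ≤ C') (hx : 0 ≤ x)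
    (hxy : x ≤ y) (s : Finset V) : G.cliqueBound k l e C s x ≤ G.cliqueBound k l e C' s y := by
  have := hC.trans hCC'
  unfold cliqueBound
  gcongr

lemma cliqueBound_mul_pow {k l e : ℕ} (hk : k ≤ e) (hl : l ≤ e) (he : 1 ≤ e) (C : ℝ)
    (s : Finset V) (x : ℝ) (d : ℕ) :
    G.cliqueBound k l e C s x * x ^ d = G.cliqueBound k l (e + d) C s x := by
  simp only [cliqueBound, show e + d - k = e - k + d by omega, show e + d - l = e - l + d by omega,
    show e + d - 1 = e - 1 + d by omega, pow_add]
  ring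

lemma pow_le_cliqueBound_of_le {k l e e' : ℕ} {M C : ℝ} (hk : k ≤ e) (hl : l ≤ e) (he : 1 ≤ e)
    (hee' : e ≤ e') (h : ∀ s : Finset V, M * #s ^ e ≤ G.cliqueBound k l e C s #s)
    (s : Finset V) : M * #s ^ e' ≤ G.cliqueBound k l e' C s #s := by
  obtain ⟨d, rfl⟩ := Nat.exists_eq_add_of_le hee'
  rw [← cliqueBound_mul_pow hk hl he, pow_add, ← mul_assoc]
  exact mul_le_mul_of_nonneg_right (h s) (by positivity)

lemma sum_cliqueBound_neighbors_le {k l e : ℕ} (hk : 1 ≤ k) (hke : k ≤ e) (C : ℝ)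
    (s : Finset V) :
    ∑ v ∈ s, G.cliqueBound (k - 1) l e C {u ∈ s | G.Adj v u} #s ≤
      #s * G.cliqueBound k l e C s #s := by
  set n : ℝ := (#s : ℝ)
  have hred :
      ∑ v ∈ s, (#(G.cliquesIn (k - 1) {u ∈ s | G.Adj v u}) : ℝ) = k * #(G.cliquesIn k s) := by
    have := G.sum_card_cliquesIn_neighbors (k - 1) s
    rw [Nat.sub_add_cancel hk] at this
    exact_mod_cast this
  have hblue : ∑ v ∈ s, (#(Gᶜ.cliquesIn l {u ∈ s | G.Adj v u}) : ℝ) ≤ n * #(Gᶜ.cliquesIn l s) := by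
    calc ∑ v ∈ s, (#(Gᶜ.cliquesIn l {u ∈ s | G.Adj v u}) : ℝ)
        ≤ ∑ _v ∈ s, (#(Gᶜ.cliquesIn l s) : ℝ) :=
          sum_le_sum fun v _ ↦ by exact_mod_cast card_le_card (cliquesIn_mono (filter_subset _ s))
      _ = n * #(Gᶜ.cliquesIn l s) := by rw [sum_const, nsmul_eq_mul]
  have hfac : ((k - 1).factorial : ℝ) * k = k.factorial := by
    rw [← Nat.cast_mul, Nat.mul_comm, Nat.mul_factorial_pred (by omega)]
  simp only [cliqueBound, sum_add_distrib, ← mul_sum, ← sum_mul, sum_const, nsmul_eq_mul, hred,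
    show e - (k - 1) = e - k + 1 by omega]
  rw [← hfac, pow_succ]
  linear_combination (l.factorial * n ^ (e - l) : ℝ) * hblue

lemma sum_cliqueBound_compl_neighbors_le {k l e : ℕ} (hl : 1 ≤ l) (hle : l ≤ e) (C : ℝ)
    (s : Finset V) :
    ∑ v ∈ s, G.cliqueBound k (l - 1) e C {u ∈ s | Gᶜ.Adj v u} #s ≤
      #s * G.cliqueBound k l e C s #s := by
  have h := Gᶜ.sum_cliqueBound_neighbors_le (l := k) hl hle C s
  simp only [cliqueBound_compl] at h
  -- the two sides differ only in the (classical) decidability instance of `Gᶜ.Adj v`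
  convert h using 4

lemma pow_le_cliqueBound_one {l : ℕ} {C : ℝ} (hl : 1 ≤ l) (hC : 0 ≤ C) (s : Finset V) :
    (#s : ℝ) ^ l ≤ G.cliqueBound 1 l l C s #s := by
  have hpow : (#s : ℝ) ^ l = 1 * #s * (#s : ℝ) ^ (l - 1) := by
    rw [one_mul, ← pow_succ', Nat.sub_add_cancel hl]
  rw [cliqueBound, card_cliquesIn_one, Nat.factorial_one, Nat.cast_one, hpow]
  have : 0 ≤ (l.factorial * #(Gᶜ.cliquesIn l s) * (#s : ℝ) ^ (l - l) + C * (#s : ℝ) ^ (l - 1)) := by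
    positivity
  linarith

lemma mul_card_sub_one_pow_le_of_mem {k l μ : ℕ} {M A B θ C : ℝ} (hθ0 : 0 ≤ θ) (hθ1 : θ ≤ 1)
    (hC : 0 ≤ C)
    (hMAB : ∀ x y : ℝ, 0 ≤ x → 0 ≤ y → M * (x + y) ^ μ ≤ θ * A * x ^ μ + (1 - θ) * B * y ^ μ)
    (hA : ∀ s : Finset V, A * #s ^ μ ≤ G.cliqueBound k (l - 1) μ C s #s)
    (hB : ∀ s : Finset V, B * #s ^ μ ≤ G.cliqueBound (k - 1) l μ C s #s)
    {s : Finset V} {v : V} (hv : v ∈ s) :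
    M * (#s - 1) ^ μ ≤ θ * G.cliqueBound k (l - 1) μ C {u ∈ s | Gᶜ.Adj v u} #s
      + (1 - θ) * G.cliqueBound (k - 1) l μ C {u ∈ s | G.Adj v u} #s := by
  have hsplit : (#s : ℝ) - 1 = #{u ∈ s | Gᶜ.Adj v u} + #{u ∈ s | G.Adj v u} := by
    have h := congrArg (Nat.cast (R := ℝ)) (card_filter_adj_add_card_filter_compl_adj (G := G) hv)
    push_cast at h
    linarith
  rw [hsplit]
  refine (hMAB _ _ (by positivity) (by positivity)).trans ?_
  rw [mul_assoc, mul_assoc]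
  have h1θ : 0 ≤ 1 - θ := by linarith
  gcongr
  · exact (hA _).trans (cliqueBound_mono hC le_rfl (by positivity)
      (Nat.cast_le.2 (card_le_card (filter_subset _ s))) _)
  · exact (hB _).trans (cliqueBound_mono hC le_rfl (by positivity)
      (Nat.cast_le.2 (card_le_card (filter_subset _ s))) _)

lemma mul_card_sub_one_pow_le_cliqueBound {k l μ : ℕ} {M A B θ C : ℝ} (hk : 1 ≤ k) (hl : 1 ≤ l)
    (hkμ : k ≤ μ) (hlμ : l ≤ μ) (hθ0 : 0 ≤ θ) (hθ1 : θ ≤ 1) (hC : 0 ≤ C)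
    (hMAB : ∀ x y : ℝ, 0 ≤ x → 0 ≤ y → M * (x + y) ^ μ ≤ θ * A * x ^ μ + (1 - θ) * B * y ^ μ)
    (hA : ∀ s : Finset V, A * #s ^ μ ≤ G.cliqueBound k (l - 1) μ C s #s)
    (hB : ∀ s : Finset V, B * #s ^ μ ≤ G.cliqueBound (k - 1) l μ C s #s)
    {s : Finset V} (hs : s.Nonempty) :
    M * (#s - 1) ^ μ ≤ G.cliqueBound k l μ C s #s := by
  set n : ℝ := (#s : ℝ)
  have h1θ : 0 ≤ 1 - θ := by linarith
  refine le_of_mul_le_mul_left ?_ (by simpa [n] using hs.card_pos : (0 : ℝ) < n)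
  calc n * (M * (n - 1) ^ μ) = ∑ _v ∈ s, M * (n - 1) ^ μ := by rw [sum_const, nsmul_eq_mul]
    _ ≤ ∑ v ∈ s, (θ * G.cliqueBound k (l - 1) μ C {u ∈ s | Gᶜ.Adj v u} n
        + (1 - θ) * G.cliqueBound (k - 1) l μ C {u ∈ s | G.Adj v u} n) :=
      sum_le_sum fun v hv ↦ mul_card_sub_one_pow_le_of_mem hθ0 hθ1 hC hMAB hA hB hv
    _ = θ * ∑ v ∈ s, G.cliqueBound k (l - 1) μ C {u ∈ s | Gᶜ.Adj v u} n
        + (1 - θ) * ∑ v ∈ s, G.cliqueBound (k - 1) l μ C {u ∈ s | G.Adj v u} n := by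
      rw [sum_add_distrib, mul_sum, mul_sum]
    _ ≤ θ * (n * G.cliqueBound k l μ C s n) + (1 - θ) * (n * G.cliqueBound k l μ C s n) := by
      gcongr
      exacts [sum_cliqueBound_compl_neighbors_le hl hlμ C s,
        sum_cliqueBound_neighbors_le hk hkμ C s]
    _ = n * G.cliqueBound k l μ C s n := by ring

lemma pow_le_cliqueBound_of_neighbors {k l μ : ℕ} {M A B θ C : ℝ} (hk : 1 ≤ k) (hl : 1 ≤ l)
    (hkμ : k ≤ μ) (hlμ : l ≤ μ) (hM0 : 0 ≤ M) (hM1 : M ≤ 1) (hθ0 : 0 ≤ θ) (hθ1 : θ ≤ 1)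
    (hC : 0 ≤ C)
    (hMAB : ∀ x y : ℝ, 0 ≤ x → 0 ≤ y → M * (x + y) ^ μ ≤ θ * A * x ^ μ + (1 - θ) * B * y ^ μ)
    (hA : ∀ s : Finset V, A * #s ^ μ ≤ G.cliqueBound k (l - 1) μ C s #s)
    (hB : ∀ s : Finset V, B * #s ^ μ ≤ G.cliqueBound (k - 1) l μ C s #s) (s : Finset V) :
    M * #s ^ μ ≤ G.cliqueBound k l μ (C + μ) s #s := by
  rcases s.eq_empty_or_nonempty with rfl | hs
  · rw [card_empty, Nat.cast_zero, zero_pow (by omega), mul_zero]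
    exact cliqueBound_nonneg (by positivity) le_rfl ∅
  have hdrop := mul_card_sub_one_pow_le_cliqueBound hk hl hkμ hlμ hθ0 hθ1 hC hMAB hA hB hs
  set n : ℝ := (#s : ℝ)
  have herr : M * (μ * n ^ (μ - 1)) ≤ μ * n ^ (μ - 1) :=
    mul_le_of_le_one_left (by positivity) hM1
  calc M * n ^ μ ≤ M * ((n - 1) ^ μ + μ * n ^ (μ - 1)) := by
        gcongr
        exact pow_le_sub_one_pow_add (Nat.one_le_cast.2 hs.card_pos) μ
    _ ≤ G.cliqueBound k l μ C s n + μ * n ^ (μ - 1) := by linarith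
    _ = G.cliqueBound k l μ (C + μ) s n := by
        simp only [cliqueBound]
        ring

end SimpleGraph

structure CliqueRecursion (M : ℕ → ℕ → ℝ) : Prop where
  apply_one : ∀ k, 1 ≤ k → M k 1 = 1
  one_apply : ∀ l, 1 ≤ l → M 1 l = 1
  apply_of_two_le : ∀ k l, 2 ≤ k → 2 ≤ l →
    M k l = (M k (l - 1) ^ (-1 / ((max k l : ℕ) : ℝ)) + M (k - 1) l ^ (-1 / ((max k l : ℕ) : ℝ)))
      ^ (-((max k l : ℕ) : ℝ))

namespace CliqueRecursion

variable {M : ℕ → ℕ → ℝ}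

theorem pos_and_le_one (hM : CliqueRecursion M) {k l : ℕ} (hk : 1 ≤ k) (hl : 1 ≤ l) :
    0 < M k l ∧ M k l ≤ 1 := by
  rcases hk.eq_or_lt with rfl | hk2
  · simp [hM.one_apply l hl]
  rcases hl.eq_or_lt with rfl | hl2
  · simp [hM.apply_one k hk]
  obtain ⟨hA0, hA1⟩ := hM.pos_and_le_one hk (by omega : 1 ≤ l - 1)
  obtain ⟨hB0, hB1⟩ := hM.pos_and_le_one (by omega : 1 ≤ k - 1) hl
  have hμ : (0 : ℝ) < (max k l : ℕ) := by positivity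
  have hexp : -1 / ((max k l : ℕ) : ℝ) ≤ 0 := div_nonpos_of_nonpos_of_nonneg (by norm_num) hμ.le
  have hA := one_le_rpow_of_pos_of_le_one_of_nonpos hA0 hA1 hexp
  have hB := one_le_rpow_of_pos_of_le_one_of_nonpos hB0 hB1 hexp
  rw [hM.apply_of_two_le k l hk2 hl2]
  exact ⟨rpow_pos_of_pos (by linarith) _, rpow_le_one_of_one_le_of_nonpos (by linarith)
    (neg_nonpos.2 hμ.le)⟩
termination_by k + l
decreasing_by all_goals omega

variable {V : Type*}

theorem pow_le_cliqueBound (hM : CliqueRecursion M) (G : SimpleGraph V) {k l : ℕ} (hk : 1 ≤ k)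
    (hl : 1 ≤ l) (s : Finset V) :
    M k l * #s ^ max k l ≤ G.cliqueBound k l (max k l) (((k + l : ℕ) : ℝ) ^ 2) s #s := by
  rcases hk.eq_or_lt with rfl | hk2
  · rw [hM.one_apply l hl, one_mul, max_eq_right hl]
    exact G.pow_le_cliqueBound_one hl (by positivity) s
  rcases hl.eq_or_lt with rfl | hl2
  · rw [hM.apply_one k hk, one_mul, max_eq_left hk, ← SimpleGraph.cliqueBound_compl]
    exact Gᶜ.pow_le_cliqueBound_one hk (by positivity) s
  obtain ⟨N, hN⟩ : ∃ N, k + l = N + 1 := ⟨k + l - 1, by omega⟩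
  set μ := max k l
  have hkμ : k ≤ μ := le_max_left k l
  have hlμ : l ≤ μ := le_max_right k l
  have hIHA (s : Finset V) :
      M k (l - 1) * #s ^ μ ≤ G.cliqueBound k (l - 1) μ ((N : ℝ) ^ 2) s #s := by
    refine SimpleGraph.pow_le_cliqueBound_of_le (le_max_left _ _) (le_max_right _ _)
      (by omega) (by omega) (fun s ↦ ?_) s
    simpa only [show k + (l - 1) = N by omega] using
      hM.pow_le_cliqueBound G hk (by omega : 1 ≤ l - 1) s
  have hIHB (s : Finset V) :
      M (k - 1) l * #s ^ μ ≤ G.cliqueBound (k - 1) l μ ((N : ℝ) ^ 2) s #s := by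
    refine SimpleGraph.pow_le_cliqueBound_of_le (le_max_left _ _) (le_max_right _ _)
      (by omega) (by omega) (fun s ↦ ?_) s
    simpa only [show k - 1 + l = N by omega] using
      hM.pow_le_cliqueBound G (by omega : 1 ≤ k - 1) hl s
  obtain ⟨hM0, hM1⟩ := hM.pos_and_le_one hk hl
  obtain ⟨θ, hθ0, hθ1, hθ⟩ := exists_weight_rpow_add_rpow_mul_add_pow_le
    (hM.pos_and_le_one hk (by omega : 1 ≤ l - 1)).1
    (hM.pos_and_le_one (by omega : 1 ≤ k - 1) hl).1 (by omega : 0 < μ)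
  rw [← hM.apply_of_two_le k l hk2 hl2] at hθ
  have hstep := G.pow_le_cliqueBound_of_neighbors (by omega) (by omega) hkμ hlμ hM0.le hM1 hθ0 hθ1
    (by positivity) hθ hIHA hIHB s
  have hC : (N : ℝ) ^ 2 + μ ≤ ((k + l : ℕ) : ℝ) ^ 2 := by
    rw [hN]
    have : (μ : ℝ) ≤ N + 1 := by exact_mod_cast (by omega : μ ≤ N + 1)
    push_cast
    nlinarith
  exact hstep.trans (SimpleGraph.cliqueBound_mono (by positivity) hC (by positivity) le_rfl s)
termination_by k + l
decreasing_by all_goals omega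

end CliqueRecursion

lemma cliqueCount_eq_card_cliquesIn {n : ℕ} (G : SimpleGraph (Fin n)) (t : ℕ) :
    cliqueCount G t = #(G.cliquesIn t univ) := by
  rw [cliqueCount, ← Set.ncard_coe_finset]
  congr 1
  ext T
  simp

lemma exists_cliqueCount_add_eq_kt (n t : ℕ) :
    ∃ G : SimpleGraph (Fin n), cliqueCount G t + cliqueCount Gᶜ t = kt n t :=
  Nat.sInf_mem (s := {m | ∃ G : SimpleGraph (Fin n), cliqueCount G t + cliqueCount Gᶜ t = m})
    ⟨_, ⊥, rfl⟩

lemma sub_div_le_ctn {t n : ℕ} {a C : ℝ} (ht : 1 ≤ t) (htn : t ≤ n)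
    (h : a * n ^ t ≤ t.factorial * kt n t + C * n ^ (t - 1)) : a - C / n ≤ ctn t n := by
  have hn : (0 : ℝ) < n := by exact_mod_cast (by omega : 0 < n)
  have hchoose : (0 : ℝ) < n.choose t := by exact_mod_cast Nat.choose_pos htn
  rcases le_or_gt (a - C / n) 0 with ha | ha
  · exact ha.trans (by unfold ctn; positivity)
  rw [ctn, le_div_iff₀ hchoose, ← mul_le_mul_iff_right₀ (by positivity : (0 : ℝ) < t.factorial)]
  have hdesc : (t.factorial : ℝ) * n.choose t ≤ (n : ℝ) ^ t := by
    rw [← Nat.cast_mul, ← Nat.descFactorial_eq_factorial_mul_choose]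
    exact_mod_cast Nat.descFactorial_le_pow n t
  have hpow : (n : ℝ) ^ t = n ^ (t - 1) * n := by rw [← pow_succ, Nat.sub_add_cancel ht]
  calc t.factorial * ((a - C / n) * n.choose t)
      = (a - C / n) * (t.factorial * n.choose t) := by ring
    _ ≤ (a - C / n) * n ^ t := by gcongr
    _ = a * n ^ t - C * n ^ (t - 1) := by rw [hpow]; field_simp
    _ ≤ t.factorial * kt n t := by linarith

/-- Theorem 4 of the paper: if `M` is the doubly-indexed sequence with
`M_{k,1} = M_{1,l} = 1` and `M_{k,l} = (M_{k,l−1}^{−1/μ} + M_{k−1,l}^{−1/μ})^{−μ}` for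
`k, l ≥ 2`, where `μ = max(k,l)`, then `c_t ≥ M_{t,t}` for every `t ≥ 2`, where
`c_t = lim_{n→∞} k_t(n)/binom(n,t)`. -/
theorem stmt7 (M : ℕ → ℕ → ℝ)
    (hM1 : ∀ k : ℕ, 1 ≤ k → M k 1 = 1)
    (hM1' : ∀ l : ℕ, 1 ≤ l → M 1 l = 1)
    (hMrec : ∀ k l : ℕ, 2 ≤ k → 2 ≤ l →
      M k l = (M k (l - 1) ^ (-1 / (max k l : ℝ)) + M (k - 1) l ^ (-1 / (max k l : ℝ)))
        ^ (-(max k l : ℝ)))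
    (t : ℕ) (ht : 2 ≤ t)
    (c : ℝ) (hc : Filter.Tendsto (fun n => ctn t n) Filter.atTop (nhds c)) :
    M t t ≤ c := by
  have hM : CliqueRecursion M :=
    ⟨hM1, hM1', fun k l hk hl ↦ by rw [hMrec k l hk hl, Nat.cast_max]⟩
  set C : ℝ := ((t + t : ℕ) : ℝ) ^ 2
  have hkt (n : ℕ) : M t t * n ^ t ≤ t.factorial * kt n t + C * n ^ (t - 1) := by
    obtain ⟨G, hG⟩ := exists_cliqueCount_add_eq_kt n t
    have h := hM.pow_le_cliqueBound G (k := t) (l := t) (by omega) (by omega) univ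
    rw [max_self, SimpleGraph.cliqueBound, Nat.sub_self, pow_zero, card_univ, Fintype.card_fin,
      ← cliqueCount_eq_card_cliquesIn, ← cliqueCount_eq_card_cliquesIn] at h
    rw [← hG]
    push_cast
    linarith
  have hlim : Filter.Tendsto (fun n : ℕ ↦ M t t - C / n) Filter.atTop (nhds (M t t)) := by
    simpa using tendsto_const_nhds.sub
      (tendsto_const_nhds.div_atTop tendsto_natCast_atTop_atTop : Filter.Tendsto
        (fun n : ℕ ↦ C / n) Filter.atTop (nhds 0))
  exact le_of_tendsto_of_tendsto hlim hc
    (Filter.eventually_atTop.2 ⟨t, fun n htn ↦ sub_div_le_ctn (by omega) htn (hkt n)⟩)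
end

section
/- Let k, l ≥ 2 be natural numbers and let {t_{i,j}}_{i,j≥2} be a threshold sequence. Define N_{k,l} = max over paths P = {(a_i,b_i)}_{i=0,…,m} in Π_{k,l} of the product over i=1..m of 1/s_i. Then for every integer n ≥ N_{k,l}, any red/blue colouring of the edges of K_n contains either a red K_k or a blue K_l; in particular the Ramsey number satisfies r(k,l) ≤ ⌈N_{k,l}⌉. -/
/-!
Write `N(k,l)` (`maxPathWeight`) for the supremum of the path weights `∏ 1/s_i`. Appending a
step to a path to `(k,l)` divides its weight by `s = 1 - t_{k+1,l}` resp. `s = t_{k,l+1}`, so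
`N(k,l) ≤ (1 - t_{k+1,l}) N(k+1,l)` and `N(k,l) ≤ t_{k,l+1} N(k,l+1)`. Adding the two gives
`N(k,l+1) + N(k+1,l) ≤ N(k+1,l+1)`, and the same argument applied to the one-point paths at
`(1,l)` and `(k,1)` gives `N(2,l) ≥ l` and `N(k,2) ≥ k`. Hence `⌊N⌋` satisfies the base cases and
the recursion of the Erdős–Szekeres bound `r(k+1,l+1) ≤ r(k,l+1) + r(k+1,l)`, and dominates `r`.
-/

/-- A path in the lattice `{(i,j) : i,j ≥ 1}` to `(k,l)`: a sequence
`(a_0,b_0), …, (a_m,b_m)` with `a_0 = 1` or `b_0 = 1`, with `a_1 ≠ 1` and `b_1 ≠ 1`,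
each step increasing exactly one coordinate by `1`, and ending at `(a_m,b_m) = (k,l)`. -/
structure LatticePath (k l : ℕ) where
  m : ℕ
  a : ℕ → ℕ
  b : ℕ → ℕ
  init : a 0 = 1 ∨ b 0 = 1
  second : 1 ≤ m → a 1 ≠ 1 ∧ b 1 ≠ 1
  step : ∀ i : ℕ, 1 ≤ i → i ≤ m →
    (a i = a (i - 1) + 1 ∧ b i = b (i - 1)) ∨ (a i = a (i - 1) ∧ b i = b (i - 1) + 1)
  end_a : a m = k
  end_b : b m = l

/-- Given a threshold sequence `T` and a path `P`, the associated numbers `s_i`: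
`s_i = t_{a_i,b_i}` if the `i`-th step increments `b`, and `s_i = 1 - t_{a_i,b_i}`
if it increments `a`. -/
noncomputable def pathS (T : ℕ → ℕ → ℝ) {k l : ℕ} (P : LatticePath k l) (i : ℕ) : ℝ :=
  if P.b i = P.b (i - 1) + 1 then T (P.a i) (P.b i) else 1 - T (P.a i) (P.b i)

open Finset

def RamseyArrow (n i j : ℕ) : Prop :=
  ∀ (V : Type) (G : SimpleGraph V) (S : Finset V), n ≤ #S →
    (∃ s ⊆ S, G.IsNClique i s) ∨ ∃ s ⊆ S, Gᶜ.IsNClique j s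

namespace RamseyArrow

variable {n n' i j a b : ℕ}

lemma mono (h : RamseyArrow n i j) (hn : n ≤ n') : RamseyArrow n' i j :=
  fun V G S hS => h V G S (hn.trans hS)

lemma symm (h : RamseyArrow n i j) : RamseyArrow n j i := fun V G S hS => by
  simpa only [compl_compl, or_comm] using h V Gᶜ S hS

lemma two_left (j : ℕ) : RamseyArrow j 2 j := by
  intro V G S hS
  by_cases hedge : ∃ x ∈ S, ∃ y ∈ S, G.Adj x y
  · obtain ⟨x, hx, y, hy, hxy⟩ := hedge
    classical
    exact .inl ⟨{x, y}, insert_subset hx (singleton_subset_iff.2 hy),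
      ⟨by simpa using SimpleGraph.isClique_pair.2 fun _ => hxy, card_pair hxy.ne⟩⟩
  · obtain ⟨s, hsS, hs⟩ := exists_subset_card_eq hS
    refine .inr ⟨s, hsS, ⟨fun x hx y hy hne => ⟨hne, fun hxy => hedge ?_⟩, hs⟩⟩
    exact ⟨x, hsS hx, y, hsS hy, hxy⟩

lemma two_right (i : ℕ) : RamseyArrow i i 2 := RamseyArrow.symm (two_left i)

/-- The red and blue neighbourhoods of a vertex of `S` have `#S - 1 ≥ a + b - 1` vertices
together, so one of them is large enough for `h₁` resp. `h₂`. -/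
lemma add (h₁ : RamseyArrow a i (j + 1)) (h₂ : RamseyArrow b (i + 1) j) (hi : i ≠ 0) :
    RamseyArrow (a + b) (i + 1) (j + 1) := by
  classical
  intro V G S hS
  obtain ⟨v, hv⟩ : S.Nonempty := by
    rw [nonempty_iff_ne_empty]
    rintro rfl
    rcases h₁ V G ∅ (by simp at hS; omega) with ⟨s, hs, hcl⟩ | ⟨s, hs, hcl⟩ <;>
    · have := hcl.card_eq
      rw [subset_empty.1 hs, card_empty] at this
      omega
  set R := (S.erase v).filter (G.Adj v)
  set B := (S.erase v).filter fun w => ¬G.Adj v w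
  have hR : R ⊆ S := (filter_subset _ _).trans (erase_subset _ _)
  have hB : B ⊆ S := (filter_subset _ _).trans (erase_subset _ _)
  have hcard : #R + #B + 1 = #S := by
    rw [card_filter_add_card_filter_not, card_erase_add_one hv]
  by_cases haR : a ≤ #R
  · rcases h₁ V G R haR with ⟨s, hs, hcl⟩ | ⟨s, hs, hcl⟩
    · refine .inl ⟨insert v s, insert_subset hv (hs.trans hR), hcl.insert fun w hw => ?_⟩
      exact (mem_filter.1 (hs hw)).2
    · exact .inr ⟨s, hs.trans hR, hcl⟩
  · rcases h₂ V G B (by omega) with ⟨s, hs, hcl⟩ | ⟨s, hs, hcl⟩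
    · exact .inl ⟨s, hs.trans hB, hcl⟩
    · refine .inr ⟨insert v s, insert_subset hv (hs.trans hB), hcl.insert fun w hw => ?_⟩
      obtain ⟨hwS, hvw⟩ := mem_filter.1 (hs hw)
      exact ⟨(ne_of_mem_erase hwS).symm, hvw⟩

end RamseyArrow

namespace LatticePath

variable {k l : ℕ}

lemma a_add_b (P : LatticePath k l) {s : ℕ} (hs : s ≤ P.m) : P.a s + P.b s = P.a 0 + P.b 0 + s := by
  induction s with
  | zero => rfl
  | succ s ih =>
    have := P.step (s + 1) (by omega) hs
    simp only [Nat.add_sub_cancel] at this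
    have := ih (by omega)
    omega

lemma m_le (P : LatticePath k l) : P.m ≤ k + l := by
  have := P.a_add_b le_rfl
  rw [P.end_a, P.end_b] at this
  omega

lemma a_add_b_le (P : LatticePath k l) {s : ℕ} (hs : s ≤ P.m) : P.a s + P.b s ≤ k + l := by
  have := P.a_add_b hs
  have := P.a_add_b le_rfl
  rw [P.end_a, P.end_b] at this
  omega

def nil (h : k = 1 ∨ l = 1) : LatticePath k l where
  m := 0
  a _ := k
  b _ := l
  init := h
  second := by omega
  step := by omega
  end_a := rfl
  end_b := rfl

def extend (P : LatticePath k l) {k' l' : ℕ} (hk' : k' ≠ 1) (hl' : l' ≠ 1)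
    (h : (k' = k + 1 ∧ l' = l) ∨ (k' = k ∧ l' = l + 1)) : LatticePath k' l' where
  m := P.m + 1
  a s := if s ≤ P.m then P.a s else k'
  b s := if s ≤ P.m then P.b s else l'
  init := by simpa using P.init
  second _ := by
    by_cases hm : 1 ≤ P.m
    · simpa [hm] using P.second hm
    · simp [hm, hk', hl']
  step s hs1 hsm := by
    rcases Nat.lt_or_ge P.m s with hs | hs
    · obtain rfl : s = P.m + 1 := by omega
      simpa [P.end_a, P.end_b] using h
    · simpa [hs, show s - 1 ≤ P.m by omega] using P.step s hs1 hs
  end_a := by simp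
  end_b := by simp

lemma nonempty (hk : 1 ≤ k) : Nonempty (LatticePath k l) := by
  induction k, hk using Nat.le_induction with
  | base => exact ⟨nil (.inl rfl)⟩
  | succ k hk ih =>
    obtain ⟨P⟩ := ih
    by_cases hl1 : l = 1
    · exact ⟨nil (.inr hl1)⟩
    · exact ⟨P.extend (by omega) hl1 (.inl ⟨rfl, rfl⟩)⟩

end LatticePath

noncomputable def pathWeight (T : ℕ → ℕ → ℝ) {k l : ℕ} (P : LatticePath k l) : ℝ :=
  ∏ i ∈ Icc 1 P.m, (pathS T P i)⁻¹

noncomputable def maxPathWeight (T : ℕ → ℕ → ℝ) (k l : ℕ) : ℝ :=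
  sSup {x : ℝ | ∃ P : LatticePath k l, x = pathWeight T P}

section PathWeight

variable (T : ℕ → ℕ → ℝ) {k l : ℕ}

@[simp]
lemma pathWeight_nil (h : k = 1 ∨ l = 1) : pathWeight T (LatticePath.nil h) = 1 := by
  simp [pathWeight, LatticePath.nil]

lemma pathWeight_extend (P : LatticePath k l) {k' l' : ℕ} (hk' : k' ≠ 1) (hl' : l' ≠ 1)
    (h : (k' = k + 1 ∧ l' = l) ∨ (k' = k ∧ l' = l + 1)) :
    pathWeight T (P.extend hk' hl' h) =
      pathWeight T P / if l' = l + 1 then T k' l' else 1 - T k' l' := by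
  rw [pathWeight, pathWeight, div_eq_mul_inv]
  refine (prod_Icc_succ_top (Nat.le_add_left 1 P.m) _).trans (congrArg₂ _ ?_ ?_)
  · refine prod_congr rfl fun s hs => ?_
    have hs := (mem_Icc.1 hs).2
    simp [pathS, LatticePath.extend, hs, show s - 1 ≤ P.m by omega]
  · simp [pathS, LatticePath.extend, P.end_b]

lemma bddAbove_pathWeight (k l : ℕ) :
    BddAbove {x : ℝ | ∃ P : LatticePath k l, x = pathWeight T P} := by
  obtain ⟨C, hC⟩ := ((range (k + l + 1) ×ˢ range (k + l + 1)).image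
    fun p => |T p.1 p.2|⁻¹ + |1 - T p.1 p.2|⁻¹).bddAbove
  refine ⟨max C 1 ^ (k + l), ?_⟩
  rintro _ ⟨P, rfl⟩
  have hfactor : ∀ s ∈ Icc 1 P.m, |(pathS T P s)⁻¹| ≤ max C 1 := by
    intro s hs
    have hsum := P.a_add_b_le (mem_Icc.1 hs).2
    have hmem := hC (mem_image_of_mem _ (show (P.a s, P.b s) ∈ _ from mem_product.2
      ⟨mem_range.2 (by omega), mem_range.2 (by omega)⟩))
    refine le_trans ?_ (hmem.trans (le_max_left _ _))
    rw [abs_inv]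
    unfold pathS
    split_ifs <;> simp [abs_nonneg]
  calc pathWeight T P ≤ ∏ s ∈ Icc 1 P.m, |(pathS T P s)⁻¹| :=
        (le_abs_self _).trans (abs_prod _ _).le
    _ ≤ ∏ _s ∈ Icc 1 P.m, max C 1 := prod_le_prod (fun _ _ => abs_nonneg _) hfactor
    _ = max C 1 ^ P.m := by simp
    _ ≤ max C 1 ^ (k + l) := pow_le_pow_right₀ (le_max_right _ _) P.m_le

lemma pathWeight_le_maxPathWeight (P : LatticePath k l) : pathWeight T P ≤ maxPathWeight T k l :=
  le_csSup (bddAbove_pathWeight T k l) ⟨P, rfl⟩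

end PathWeight

section MaxPathWeight

variable {T : ℕ → ℕ → ℝ} (hT : ∀ i j : ℕ, 2 ≤ i → 2 ≤ j → 0 < T i j ∧ T i j < 1)
include hT

lemma pathWeight_le_mul_maxPathWeight_succ_left {k l : ℕ} (P : LatticePath k l) (hk : 1 ≤ k)
    (hl : 2 ≤ l) : pathWeight T P ≤ (1 - T (k + 1) l) * maxPathWeight T (k + 1) l := by
  rw [← div_le_iff₀' (by linarith [(hT (k + 1) l (by omega) hl).2])]
  have h := pathWeight_le_maxPathWeight T (P.extend (k' := k + 1) (l' := l) (by omega)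
    (by omega) (.inl ⟨rfl, rfl⟩))
  rwa [pathWeight_extend, if_neg (by omega)] at h

lemma pathWeight_le_mul_maxPathWeight_succ_right {k l : ℕ} (P : LatticePath k l) (hk : 2 ≤ k)
    (hl : 1 ≤ l) : pathWeight T P ≤ T k (l + 1) * maxPathWeight T k (l + 1) := by
  rw [← div_le_iff₀' (hT k (l + 1) hk (by omega)).1]
  have h := pathWeight_le_maxPathWeight T (P.extend (k' := k) (l' := l + 1) (by omega)
    (by omega) (.inr ⟨rfl, rfl⟩))
  rwa [pathWeight_extend, if_pos rfl] at h

lemma maxPathWeight_le_mul_succ_left {k l : ℕ} (hk : 1 ≤ k) (hl : 2 ≤ l) :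
    maxPathWeight T k l ≤ (1 - T (k + 1) l) * maxPathWeight T (k + 1) l := by
  obtain ⟨P⟩ := LatticePath.nonempty (l := l) hk
  refine csSup_le ⟨_, P, rfl⟩ ?_
  rintro _ ⟨Q, rfl⟩
  exact pathWeight_le_mul_maxPathWeight_succ_left hT Q hk hl

lemma maxPathWeight_le_mul_succ_right {k l : ℕ} (hk : 2 ≤ k) (hl : 1 ≤ l) :
    maxPathWeight T k l ≤ T k (l + 1) * maxPathWeight T k (l + 1) := by
  obtain ⟨P⟩ := LatticePath.nonempty (l := l) (show 1 ≤ k by omega)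
  refine csSup_le ⟨_, P, rfl⟩ ?_
  rintro _ ⟨Q, rfl⟩
  exact pathWeight_le_mul_maxPathWeight_succ_right hT Q hk hl

lemma one_le_mul_maxPathWeight_two_left {l : ℕ} (hl : 2 ≤ l) :
    1 ≤ (1 - T 2 l) * maxPathWeight T 2 l := by
  simpa using pathWeight_le_mul_maxPathWeight_succ_left hT (LatticePath.nil (.inl rfl)) le_rfl hl

lemma one_le_mul_maxPathWeight_two_right {k : ℕ} (hk : 2 ≤ k) :
    1 ≤ T k 2 * maxPathWeight T k 2 := by
  simpa using pathWeight_le_mul_maxPathWeight_succ_right hT (LatticePath.nil (.inr rfl)) hk le_rfl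

lemma two_le_maxPathWeight_two_two : 2 ≤ maxPathWeight T 2 2 := by
  linarith [one_le_mul_maxPathWeight_two_left hT le_rfl,
    one_le_mul_maxPathWeight_two_right hT le_rfl]

lemma le_maxPathWeight_two_left {l : ℕ} (hl : 2 ≤ l) : (l : ℝ) ≤ maxPathWeight T 2 l := by
  induction l, hl using Nat.le_induction with
  | base => exact_mod_cast two_le_maxPathWeight_two_two hT
  | succ l hl ih =>
    push_cast
    linarith [maxPathWeight_le_mul_succ_right hT le_rfl (by omega : 1 ≤ l),
      one_le_mul_maxPathWeight_two_left hT (by omega : 2 ≤ l + 1)]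

lemma le_maxPathWeight_two_right {k : ℕ} (hk : 2 ≤ k) : (k : ℝ) ≤ maxPathWeight T k 2 := by
  induction k, hk using Nat.le_induction with
  | base => exact_mod_cast two_le_maxPathWeight_two_two hT
  | succ k hk ih =>
    push_cast
    linarith [maxPathWeight_le_mul_succ_left hT (by omega : 1 ≤ k) le_rfl,
      one_le_mul_maxPathWeight_two_right hT (by omega : 2 ≤ k + 1)]

lemma maxPathWeight_pos {k l : ℕ} (hk : 2 ≤ k) (hl : 2 ≤ l) : 0 < maxPathWeight T k l := by
  induction k, hk using Nat.le_induction with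
  | base => linarith [le_maxPathWeight_two_left hT hl, (show (2 : ℝ) ≤ l by exact_mod_cast hl)]
  | succ k hk ih =>
    exact pos_of_mul_pos_right (ih.trans_le (maxPathWeight_le_mul_succ_left hT (by omega) hl))
      (by linarith [(hT (k + 1) l (by omega) hl).2])

lemma maxPathWeight_add_le {k l : ℕ} (hk : 2 ≤ k) (hl : 2 ≤ l) :
    maxPathWeight T k (l + 1) + maxPathWeight T (k + 1) l ≤ maxPathWeight T (k + 1) (l + 1) := by
  linarith [maxPathWeight_le_mul_succ_left hT (k := k) (l := l + 1) (by omega) (by omega),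
    maxPathWeight_le_mul_succ_right hT (k := k + 1) (l := l) (by omega) (by omega)]

theorem ramseyArrow_floor_maxPathWeight {k l : ℕ} (hk : 2 ≤ k) (hl : 2 ≤ l) :
    RamseyArrow ⌊maxPathWeight T k l⌋₊ k l := by
  induction k, hk using Nat.le_induction generalizing l with
  | base => exact (RamseyArrow.two_left l).mono (Nat.le_floor (le_maxPathWeight_two_left hT hl))
  | succ k hk ih =>
    induction l, hl using Nat.le_induction with
    | base =>
      exact (RamseyArrow.two_right _).mono (Nat.le_floor (le_maxPathWeight_two_right hT (by omega)))
    | succ l hl ihl =>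
      refine (RamseyArrow.add (ih (by omega)) ihl (by omega)).mono (Nat.le_floor ?_)
      push_cast
      linarith [Nat.floor_le (maxPathWeight_pos hT hk (show 2 ≤ l + 1 by omega)).le,
        Nat.floor_le (maxPathWeight_pos hT (show 2 ≤ k + 1 by omega) hl).le,
        maxPathWeight_add_le hT hk hl]

end MaxPathWeight

theorem stmt10_general (k l : ℕ) (hk : 2 ≤ k) (hl : 2 ≤ l) (T : ℕ → ℕ → ℝ)
    (hT : ∀ i j : ℕ, 2 ≤ i → 2 ≤ j → 0 < T i j ∧ T i j < 1) :
    (∀ n : ℕ,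
        sSup {x : ℝ | ∃ P : LatticePath k l,
          x = ∏ i ∈ Finset.Icc 1 P.m, (pathS T P i)⁻¹} ≤ (n : ℝ) →
        ∀ G : SimpleGraph (Fin n),
          (∃ s : Finset (Fin n), G.IsNClique k s) ∨
          (∃ s : Finset (Fin n), Gᶜ.IsNClique l s)) ∧
    sInf {n : ℕ | ∀ G : SimpleGraph (Fin n),
        (∃ s : Finset (Fin n), G.IsNClique k s) ∨ (∃ s : Finset (Fin n), Gᶜ.IsNClique l s)}
      ≤ ⌈sSup {x : ℝ | ∃ P : LatticePath k l,
          x = ∏ i ∈ Finset.Icc 1 P.m, (pathS T P i)⁻¹}⌉₊ := by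
  have hramsey : ∀ n : ℕ, maxPathWeight T k l ≤ n → ∀ G : SimpleGraph (Fin n),
      (∃ s : Finset (Fin n), G.IsNClique k s) ∨ (∃ s : Finset (Fin n), Gᶜ.IsNClique l s) :=
    fun n hn G => by
      simpa using ((ramseyArrow_floor_maxPathWeight hT hk hl).mono (Nat.floor_le_of_le hn)) _ G
        Finset.univ (by simp)
  exact ⟨hramsey, Nat.sInf_le (hramsey _ (Nat.le_ceil _))⟩

/-- The Erdős–Szekeres-type Ramsey bound (Section 5 of the paper).  A red/blue
colouring of `K_n` is encoded by a graph `G` (red edges) and `Gᶜ` (blue edges).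
With `N_{k,l} = max_{P ∈ Π_{k,l}} ∏ 1/s_i`, every colouring of `K_n` with `n ≥ N_{k,l}`
contains a red `K_k` or a blue `K_l`; in particular `r(k,l) ≤ ⌈N_{k,l}⌉`, where
`r(k,l)` is the least `n` such that every colouring of `K_n` contains a red `K_k` or a
blue `K_l`. -/
theorem stmt10 (k l : ℕ) (hk : 2 ≤ k) (hl : 2 ≤ l) (T : ℕ → ℕ → ℝ)
    (hT : ∀ i j : ℕ, 2 ≤ i → 2 ≤ j → 0 < T i j ∧ T i j < 1)
    (hTsymm : ∀ i j : ℕ, 2 ≤ i → 2 ≤ j → T j i = 1 - T i j) :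
    (∀ n : ℕ,
        sSup {x : ℝ | ∃ P : LatticePath k l,
          x = ∏ i ∈ Finset.Icc 1 P.m, (pathS T P i)⁻¹} ≤ (n : ℝ) →
        ∀ G : SimpleGraph (Fin n),
          (∃ s : Finset (Fin n), G.IsNClique k s) ∨
          (∃ s : Finset (Fin n), Gᶜ.IsNClique l s)) ∧
    sInf {n : ℕ | ∀ G : SimpleGraph (Fin n),
        (∃ s : Finset (Fin n), G.IsNClique k s) ∨ (∃ s : Finset (Fin n), Gᶜ.IsNClique l s)}
      ≤ ⌈sSup {x : ℝ | ∃ P : LatticePath k l,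
          x = ∏ i ∈ Finset.Icc 1 P.m, (pathS T P i)⁻¹}⌉₊ :=
  stmt10_general k l hk hl T hT
end

section
/- For all integers k, l ≥ 1, every red/blue colouring of the edges of the complete graph on binom(k+l, k) vertices contains a red K_k or a blue K_l; that is, r(k,l) ≤ binom(k+l, k). -/
/-! Induction on `k + l`: by Pascal's rule, a vertex `v` of a set of `binom(k+l,k)` vertices has
at least `binom(k-1+l,k-1)` red neighbours or at least `binom(k+l-1,k)` blue ones, and a red
`K_(k-1)` among the former or a blue `K_(l-1)` among the latter extends by `v`. -/

open Finset

namespace SimpleGraph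

variable {V : Type*}

theorem exists_isNClique_succ {H : SimpleGraph V} {A s : Finset V} {v : V} {n : ℕ}
    (hv : v ∈ A) (hsA : s ⊆ A) (hadj : ∀ w ∈ s, H.Adj v w) (hs : H.IsNClique n s) :
    ∃ t ⊆ A, H.IsNClique (n + 1) t := by
  classical
  exact ⟨insert v s, insert_subset hv hsA, hs.insert hadj⟩

theorem exists_isNClique_or_compl_isNClique_of_choose_le [DecidableEq V] (G : SimpleGraph V)
    [DecidableRel G.Adj] (k l : ℕ) (A : Finset V) (hA : (k + l).choose k ≤ #A) :
    (∃ s ⊆ A, G.IsNClique k s) ∨ ∃ s ⊆ A, Gᶜ.IsNClique l s := by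
  induction k generalizing l A with
  | zero => exact Or.inl ⟨∅, empty_subset A, isNClique_zero.2 rfl⟩
  | succ k ihk =>
    induction l generalizing A with
    | zero => exact Or.inr ⟨∅, empty_subset A, isNClique_zero.2 rfl⟩
    | succ l ihl =>
      obtain ⟨v, hv⟩ : A.Nonempty :=
        card_pos.1 ((Nat.choose_pos (Nat.le_add_right _ _)).trans_le hA)
      set N := (A.erase v).filter (G.Adj v)
      set M := (A.erase v).filter (fun w => ¬G.Adj v w)
      have hNA : N ⊆ A := (filter_subset _ _).trans (erase_subset v A)
      have hMA : M ⊆ A := (filter_subset _ _).trans (erase_subset v A)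
      have hcard : #N + #M + 1 = #A := by
        rw [card_filter_add_card_filter_not, card_erase_add_one hv]
      have hpascal : (k + 1 + (l + 1)).choose (k + 1) =
          (k + (l + 1)).choose k + (k + 1 + l).choose (k + 1) := by
        rw [show k + 1 + (l + 1) = k + (l + 1) + 1 by omega, Nat.choose_succ_succ',
          show k + 1 + l = k + (l + 1) by omega]
      rcases (by omega : (k + (l + 1)).choose k ≤ #N ∨ (k + 1 + l).choose (k + 1) ≤ #M)
        with hN | hM
      · rcases ihk (l + 1) N hN with ⟨s, hsN, hs⟩ | ⟨s, hsN, hs⟩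
        · exact Or.inl (exists_isNClique_succ hv (hsN.trans hNA)
            (fun w hw => (mem_filter.1 (hsN hw)).2) hs)
        · exact Or.inr ⟨s, hsN.trans hNA, hs⟩
      · rcases ihl M hM with ⟨s, hsM, hs⟩ | ⟨s, hsM, hs⟩
        · exact Or.inl ⟨s, hsM.trans hMA, hs⟩
        · refine Or.inr (exists_isNClique_succ hv (hsM.trans hMA) (fun w hw => ?_) hs)
          obtain ⟨hwv, hvw⟩ := mem_filter.1 (hsM hw)
          exact (compl_adj G v w).2 ⟨(ne_of_mem_erase hwv).symm, hvw⟩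

end SimpleGraph

theorem stmt12_general (k l : ℕ) :
    (∀ G : SimpleGraph (Fin ((k + l).choose k)),
      (∃ s : Finset (Fin ((k + l).choose k)), G.IsNClique k s) ∨
      (∃ s : Finset (Fin ((k + l).choose k)), Gᶜ.IsNClique l s)) ∧
    sInf {n : ℕ | ∀ G : SimpleGraph (Fin n),
        (∃ s : Finset (Fin n), G.IsNClique k s) ∨ (∃ s : Finset (Fin n), Gᶜ.IsNClique l s)}
      ≤ (k + l).choose k := by
  have hcolouring : ∀ G : SimpleGraph (Fin ((k + l).choose k)),
      (∃ s : Finset (Fin ((k + l).choose k)), G.IsNClique k s) ∨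
      (∃ s : Finset (Fin ((k + l).choose k)), Gᶜ.IsNClique l s) := fun G => by
    classical
    simpa using G.exists_isNClique_or_compl_isNClique_of_choose_le k l univ (by simp)
  exact ⟨hcolouring, Nat.sInf_le hcolouring⟩

/-- The Erdős–Szekeres bound `r(k,l) ≤ binom(k+l,k)` for `k, l ≥ 1`: every red/blue
colouring of the edges of the complete graph on `binom(k+l,k)` vertices (encoded by a
graph `G` of red edges, with blue edges those of `Gᶜ`) contains a red `K_k` or a blue
`K_l`; consequently the Ramsey number `r(k,l)`, the least `n` such that every colouring
of `K_n` contains a red `K_k` or a blue `K_l`, is at most `binom(k+l,k)`. -/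
theorem stmt12 (k l : ℕ) (hk : 1 ≤ k) (hl : 1 ≤ l) :
    (∀ G : SimpleGraph (Fin ((k + l).choose k)),
      (∃ s : Finset (Fin ((k + l).choose k)), G.IsNClique k s) ∨
      (∃ s : Finset (Fin ((k + l).choose k)), Gᶜ.IsNClique l s)) ∧
    sInf {n : ℕ | ∀ G : SimpleGraph (Fin n),
        (∃ s : Finset (Fin n), G.IsNClique k s) ∨ (∃ s : Finset (Fin n), Gᶜ.IsNClique l s)}
      ≤ (k + l).choose k :=
  stmt12_general k l
end

section
/- Let m ≥ 1 and let a_0, a_1, …, a_m be real numbers with a_0 = 1/2, 1/2 ≤ a_1 < 1, and satisfying the recurrence (1 − a_{i+1})/(1 − a_i) = a_{i−1}/a_i for 1 ≤ i ≤ m−1. Then: (i) the sequence is nondecreasing and lies in [1/2, 1); (ii) the successive ratios are decreasing, i.e. a_i/a_{i+1} ≥ a_{i−1}/a_i for 1 ≤ i ≤ m−1; and (iii) (a_m/a_{m−1})^m ≤ a_m/a_0 ≤ 2. -/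
/-!
Clearing denominators, the recurrence reads `(1 - a (i+1)) * a i = a (i-1) * (1 - a i)`, so
`1 - a (i+1)` is `1 - a i` scaled by `a (i-1) / a i ∈ (0, 1]`: by induction the sequence
increases and stays below `1`. With `x ≤ y` consecutive terms and `z` the next one,
`y * (y ^ 2 - x * z) = (y - x) * (y ^ 2 + x * y - x)`, and the last factor is at least
`x * (2 * x - 1) ≥ 0`; so the sequence is log-concave, i.e. its successive ratios decrease.
Hence the last ratio `r = a m / a (m-1)` is the smallest, and `a m ≥ r ^ m * a 0`.
-/

lemma le_and_lt_one_of_one_sub_div_eq {x y z : ℝ} (hx : 0 < x) (hxy : x ≤ y) (hy : y < 1)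
    (h : (1 - z) / (1 - y) = x / y) : y ≤ z ∧ z < 1 := by
  have key : (1 - z) * y = x * (1 - y) := (div_eq_div_iff (by linarith) (by linarith)).mp h
  constructor <;> nlinarith

lemma mul_le_sq_of_one_sub_div_eq {x y z : ℝ} (hx : 1 / 2 ≤ x) (hxy : x ≤ y) (hy : y < 1)
    (h : (1 - z) / (1 - y) = x / y) : x * z ≤ y ^ 2 := by
  have key : (1 - z) * y = x * (1 - y) := (div_eq_div_iff (by linarith) (by linarith)).mp h
  have hfactor : y * (y ^ 2 - x * z) = (y - x) * (y ^ 2 + x * y - x) := by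
    linear_combination x * key
  have hnonneg : 0 ≤ (y - x) * (y ^ 2 + x * y - x) :=
    mul_nonneg (by linarith) (by nlinarith)
  nlinarith

lemma div_le_div_of_mul_le_sq {x y z : ℝ} (hy : 0 < y) (hz : 0 < z) (h : x * z ≤ y ^ 2) :
    x / y ≤ y / z := by
  rw [div_le_div_iff₀ hy hz]
  nlinarith

section Recurrence

variable {m : ℕ} {a : ℕ → ℝ}

lemma le_succ_and_lt_one_of_recurrence (h0 : 0 < a 0) (h01 : a 0 ≤ a 1) (h1 : a 1 < 1)
    (hrec : ∀ i : ℕ, 1 ≤ i → i ≤ m - 1 → (1 - a (i + 1)) / (1 - a i) = a (i - 1) / a i) :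
    ∀ i < m, a 0 ≤ a i ∧ a i ≤ a (i + 1) ∧ a (i + 1) < 1
  | 0, _ => ⟨le_rfl, h01, h1⟩
  | i + 1, hi => by
    obtain ⟨h0i, hii, hi1⟩ := le_succ_and_lt_one_of_recurrence h0 h01 h1 hrec i (by omega)
    have hstep := hrec (i + 1) (by omega) (by omega)
    rw [Nat.add_sub_cancel] at hstep
    exact ⟨h0i.trans hii, le_and_lt_one_of_one_sub_div_eq (h0.trans_le h0i) hii hi1 hstep⟩

lemma mul_le_sq_of_recurrence (h0 : 1 / 2 ≤ a 0) (h01 : a 0 ≤ a 1) (h1 : a 1 < 1)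
    (hrec : ∀ i : ℕ, 1 ≤ i → i ≤ m - 1 → (1 - a (i + 1)) / (1 - a i) = a (i - 1) / a i)
    (i : ℕ) (hi : i + 2 ≤ m) : a i * a (i + 2) ≤ a (i + 1) ^ 2 := by
  obtain ⟨h0i, hii, hi1⟩ :=
    le_succ_and_lt_one_of_recurrence (by linarith) h01 h1 hrec i (by omega)
  have hstep := hrec (i + 1) (by omega) (by omega)
  rw [Nat.add_sub_cancel] at hstep
  exact mul_le_sq_of_one_sub_div_eq (h0.trans h0i) hii hi1 hstep

end Recurrence

section LogConcave

variable {m : ℕ} {a : ℕ → ℝ}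

lemma pow_mul_le_of_mul_le_succ {r : ℝ} (hr : 0 ≤ r) :
    ∀ n, (∀ i < n, r * a i ≤ a (i + 1)) → r ^ n * a 0 ≤ a n
  | 0, _ => by simp
  | n + 1, h => calc
      r ^ (n + 1) * a 0 = r * (r ^ n * a 0) := by ring
      _ ≤ r * a n := mul_le_mul_of_nonneg_left
          (pow_mul_le_of_mul_le_succ hr n fun i hi => h i (by omega)) hr
      _ ≤ a (n + 1) := h n n.lt_succ_self

lemma antitoneOn_div_of_mul_le_sq (hpos : ∀ i ≤ m, 0 < a i)
    (hlc : ∀ i, i + 2 ≤ m → a i * a (i + 2) ≤ a (i + 1) ^ 2) :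
    AntitoneOn (fun i => a (i + 1) / a i) (Set.Iio m) := by
  refine antitoneOn_of_succ_le Set.ordConnected_Iio fun i _ _ hi => ?_
  simp only [Order.succ_eq_add_one, Set.mem_Iio] at hi ⊢
  exact div_le_div_of_mul_le_sq (hpos _ (by omega)) (hpos _ (by omega))
    (by rw [mul_comm]; exact hlc i (by omega))

lemma pow_div_pred_le_div_of_mul_le_sq (hpos : ∀ i ≤ m, 0 < a i)
    (hlc : ∀ i, i + 2 ≤ m → a i * a (i + 2) ≤ a (i + 1) ^ 2) :
    (a m / a (m - 1)) ^ m ≤ a m / a 0 := by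
  have hr : 0 ≤ a m / a (m - 1) := div_nonneg (hpos m le_rfl).le (hpos _ (by omega)).le
  rw [le_div_iff₀ (hpos 0 (by omega))]
  refine pow_mul_le_of_mul_le_succ hr m fun i hi => ?_
  have hratio : a (m - 1 + 1) / a (m - 1) ≤ a (i + 1) / a i :=
    antitoneOn_div_of_mul_le_sq hpos hlc hi (show m - 1 < m by omega) (by omega)
  rw [Nat.sub_add_cancel (by omega : 1 ≤ m)] at hratio
  rwa [le_div_iff₀ (hpos i (by omega))] at hratio

end LogConcave

theorem stmt15_general (m : ℕ) (a : ℕ → ℝ)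
    (h0 : a 0 = 1 / 2) (h1 : 1 / 2 ≤ a 1) (h1' : a 1 < 1)
    (hrec : ∀ i : ℕ, 1 ≤ i → i ≤ m - 1 →
      (1 - a (i + 1)) / (1 - a i) = a (i - 1) / a i) :
    (∀ i : ℕ, i < m → a i ≤ a (i + 1)) ∧
    (∀ i : ℕ, i ≤ m → 1 / 2 ≤ a i ∧ a i < 1) ∧
    (∀ i : ℕ, 1 ≤ i → i ≤ m - 1 → a (i - 1) / a i ≤ a i / a (i + 1)) ∧
    (a m / a (m - 1)) ^ m ≤ a m / a 0 ∧ a m / a 0 ≤ 2 := by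
  have h01 : a 0 ≤ a 1 := h0 ▸ h1
  have hinv := le_succ_and_lt_one_of_recurrence (by rw [h0]; norm_num) h01 h1' hrec
  have hbounds : ∀ i ≤ m, 1 / 2 ≤ a i ∧ a i < 1
    | 0, _ => by rw [h0]; norm_num
    | i + 1, hi =>
      have ⟨h0i, hii, hi1⟩ := hinv i (by omega)
      ⟨h0 ▸ h0i.trans hii, hi1⟩
  have hpos : ∀ i ≤ m, 0 < a i := fun i hi => by linarith [(hbounds i hi).1]
  have hlc := mul_le_sq_of_recurrence h0.ge h01 h1' hrec
  refine ⟨fun i hi => (hinv i hi).2.1, hbounds, ?_, pow_div_pred_le_div_of_mul_le_sq hpos hlc, ?_⟩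
  · rintro (_ | i) hi hi'
    · omega
    · rw [Nat.add_sub_cancel]
      exact div_le_div_of_mul_le_sq (hpos _ (by omega)) (hpos _ (by omega)) (hlc i (by omega))
  · rw [h0, div_le_iff₀ (by norm_num)]
    linarith [(hbounds m le_rfl).2]

/-- Properties of the sequence `a_0 = 1/2 ≤ a_1 < 1` with
`(1 − a_{i+1})/(1 − a_i) = a_{i−1}/a_i` for `1 ≤ i ≤ m−1`:
(i) it is nondecreasing and lies in `[1/2, 1)`;
(ii) the successive ratios decrease: `a_{i−1}/a_i ≤ a_i/a_{i+1}`;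
(iii) `(a_m/a_{m−1})^m ≤ a_m/a_0 ≤ 2`. -/
theorem stmt15 (m : ℕ) (hm : 1 ≤ m) (a : ℕ → ℝ)
    (h0 : a 0 = 1 / 2) (h1 : 1 / 2 ≤ a 1) (h1' : a 1 < 1)
    (hrec : ∀ i : ℕ, 1 ≤ i → i ≤ m - 1 →
      (1 - a (i + 1)) / (1 - a i) = a (i - 1) / a i) :
    (∀ i : ℕ, i < m → a i ≤ a (i + 1)) ∧
    (∀ i : ℕ, i ≤ m → 1 / 2 ≤ a i ∧ a i < 1) ∧
    (∀ i : ℕ, 1 ≤ i → i ≤ m - 1 → a (i - 1) / a i ≤ a i / a (i + 1)) ∧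
    (a m / a (m - 1)) ^ m ≤ a m / a 0 ∧ a m / a 0 ≤ 2 :=
  stmt15_general m a h0 h1 h1' hrec
end

section
/- Fix an integer m ≥ 1 and define f : [1/2, 1) → ℝ by f(a) = a_m, where a_0 = 1/2, a_1 = a, and a_{i+1} = 1 − (1 − a_i)·a_{i−1}/a_i for 1 ≤ i ≤ m−1. Then f is continuous and strictly increasing on [1/2,1), f(1/2) = 1/2, f(a) → 1 as a → 1⁻, and consequently for every y ∈ [1/2, 1) there exists a ∈ [1/2, 1) with f(a) = y. -/
/-!
The recurrence conserves `(1 - a_{i+1}) a_i = (1 - a)/2`, so that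
`a_{i+1} = 1 - (1 - a)/(2 a_i)`. In this form every claim is transparent: the map is increasing
both in the seed `a` and in `a_i`, continuous while `a_i ≥ 1/2`, fixes `1/2` at the seed `1/2`,
and at the seed `1` gives `a_i = 1`. Since all of this holds on the closed interval `[1/2, 1]`,
the limit at `1⁻` is continuity at `1` and the surjectivity is the intermediate value theorem
on `[1/2, 1]`.
-/

/-- The sequence `a_0 = 1/2`, `a_1 = a`,
`a_{i+1} = 1 − (1 − a_i)·a_{i−1}/a_i` determined by the seed `a`. -/
noncomputable def seedSeq (a : ℝ) : ℕ → ℝ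
  | 0 => 1 / 2
  | 1 => a
  | (i + 2) => 1 - (1 - seedSeq a (i + 1)) * seedSeq a i / seedSeq a (i + 1)

open Set Filter Topology

lemma seedSeq_step (a : ℝ) (i : ℕ) :
    seedSeq a (i + 2) = 1 - (1 - seedSeq a (i + 1)) * seedSeq a i / seedSeq a (i + 1) := rfl

section Seed

variable {a : ℝ} (ha : a ∈ Icc (1 / 2 : ℝ) 1)
include ha

lemma seedSeq_mem_Icc_and_conserved (i : ℕ) :
    seedSeq a i ∈ Icc (1 / 2 : ℝ) 1 ∧ (1 - seedSeq a (i + 1)) * seedSeq a i = (1 - a) / 2 := by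
  induction i with
  | zero => exact ⟨by norm_num [seedSeq], by simp only [seedSeq]; ring⟩
  | succ i ih =>
    obtain ⟨⟨hlo, hhi⟩, hcons⟩ := ih
    have hlo' : 1 / 2 ≤ seedSeq a (i + 1) := by nlinarith [ha.1, ha.2]
    have hhi' : seedSeq a (i + 1) ≤ 1 := by nlinarith [ha.2]
    refine ⟨⟨hlo', hhi'⟩, ?_⟩
    rw [seedSeq_step]
    field_simp
    linarith

lemma seedSeq_mem_Icc (i : ℕ) : seedSeq a i ∈ Icc (1 / 2 : ℝ) 1 :=
  (seedSeq_mem_Icc_and_conserved ha i).1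

lemma seedSeq_succ_eq (i : ℕ) : seedSeq a (i + 1) = 1 - (1 - a) / (2 * seedSeq a i) := by
  obtain ⟨⟨hlo, -⟩, hcons⟩ := seedSeq_mem_Icc_and_conserved ha i
  field_simp
  linarith

end Seed

lemma seedSeq_half (i : ℕ) : seedSeq (1 / 2) i = 1 / 2 := by
  have ha : (1 / 2 : ℝ) ∈ Icc (1 / 2 : ℝ) 1 := by norm_num
  induction i with
  | zero => rfl
  | succ i ih => rw [seedSeq_succ_eq ha, ih]; norm_num

lemma seedSeq_one_succ (i : ℕ) : seedSeq 1 (i + 1) = 1 := by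
  rw [seedSeq_succ_eq (by norm_num)]; simp

lemma seedSeq_continuousOn (i : ℕ) :
    ContinuousOn (fun a : ℝ => seedSeq a i) (Icc (1 / 2 : ℝ) 1) := by
  induction i with
  | zero => exact continuousOn_const
  | succ i ih =>
    have hne : ∀ a ∈ Icc (1 / 2 : ℝ) 1, 2 * seedSeq a i ≠ 0 := fun a ha => by
      linarith [(seedSeq_mem_Icc ha i).1]
    have hformula : ContinuousOn (fun a : ℝ => 1 - (1 - a) / (2 * seedSeq a i))
        (Icc (1 / 2 : ℝ) 1) :=
      continuousOn_const.sub
        ((continuousOn_const.sub continuousOn_id).div (continuousOn_const.mul ih) hne)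
    exact hformula.congr fun a ha => seedSeq_succ_eq ha i

lemma seedSeq_strictMonoOn {i : ℕ} (hi : 1 ≤ i) :
    StrictMonoOn (fun a : ℝ => seedSeq a i) (Icc (1 / 2 : ℝ) 1) := by
  induction i, hi using Nat.le_induction with
  | base => exact strictMonoOn_id
  | succ i hi ih =>
    intro a ha b hb hab
    have hai := (seedSeq_mem_Icc ha i).1
    have hlt : (1 - b) / (2 * seedSeq b i) < (1 - a) / (2 * seedSeq a i) :=
      div_lt_div₀ (by linarith) (by linarith [ih ha hb hab]) (by linarith [hb.2]) (by linarith)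
    simp only [seedSeq_succ_eq ha, seedSeq_succ_eq hb]
    linarith

/-- For `m ≥ 1`, the function `f(a) = a_m` (with `a_0 = 1/2`, `a_1 = a` and
`a_{i+1} = 1 − (1 − a_i)·a_{i−1}/a_i`) is continuous and strictly increasing on
`[1/2, 1)`, satisfies `f(1/2) = 1/2` and `f(a) → 1` as `a → 1⁻`, and consequently takes
every value `y ∈ [1/2, 1)`. -/
theorem stmt16 (m : ℕ) (hm : 1 ≤ m) :
    ContinuousOn (fun a : ℝ => seedSeq a m) (Set.Ico (1 / 2 : ℝ) 1) ∧
    StrictMonoOn (fun a : ℝ => seedSeq a m) (Set.Ico (1 / 2 : ℝ) 1) ∧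
    seedSeq (1 / 2) m = 1 / 2 ∧
    Filter.Tendsto (fun a : ℝ => seedSeq a m) (nhdsWithin 1 (Set.Iio 1)) (nhds 1) ∧
    ∀ y ∈ Set.Ico (1 / 2 : ℝ) 1, ∃ a ∈ Set.Ico (1 / 2 : ℝ) 1, seedSeq a m = y := by
  have hcont := seedSeq_continuousOn m
  have hone : seedSeq 1 m = 1 := by
    obtain ⟨k, rfl⟩ := Nat.exists_eq_add_of_le' hm
    exact seedSeq_one_succ k
  refine ⟨hcont.mono Ico_subset_Icc_self, (seedSeq_strictMonoOn hm).mono Ico_subset_Icc_self,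
    seedSeq_half m, ?_, ?_⟩
  · have hlim := (hcont 1 (right_mem_Icc.2 (by norm_num))).tendsto
    rw [hone] at hlim
    rw [← nhdsWithin_Ico_eq_nhdsLT (by norm_num : (1 / 2 : ℝ) < 1)]
    exact hlim.mono_left (nhdsWithin_mono _ Ico_subset_Icc_self)
  · intro y hy
    have hivt := intermediate_value_Ico (by norm_num : (1 / 2 : ℝ) ≤ 1) hcont
    rw [seedSeq_half, hone] at hivt
    exact hivt hy
end
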